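/- arXiv:1709.10289 — 11 statements merged into one kernel-verified Lean document; each statement's English description precedes it below -/
import Mathlib

section
/- For every set packing game with n players, every real α ≥ 1, every α-approximate Nash equilibrium S = (S_1,…,S_n), and every feasible profile O = (O_1,…,O_n), the total values satisfy w(O) ≤ (α+1)·w(S). -/
/-!
Player `i` may deviate from an equilibrium `S` to `O i` minus the items held by the other
players: it is a feasible strategy by downward closure and disjoint from every `S k`, `k ≠ i`.
Hence `w(O i) ≤ α w(S i) + w(O i ∩ ⋃ₖ S k)`, and since the `O i` are pairwise disjoint the
second terms add up to at most `w(⋃ₖ S k) = w(S)`.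
-/

open Finset Function

variable {ι κ : Type*} [DecidableEq ι]

lemma disjoint_sdiff_biUnion_erase [Fintype κ] [DecidableEq κ] (S : κ → Finset ι)
    (A : Finset ι) {i k : κ} (hk : k ≠ i) :
    Disjoint (A \ (univ.erase i).biUnion S) (S k) :=
  sdiff_disjoint.mono_right (subset_biUnion_of_mem S (mem_erase.2 ⟨hk, mem_univ k⟩))

lemma sum_le_mul_add_sum_inter_biUnion [Fintype κ] [DecidableEq κ] {w : ι → ℝ} {α : ℝ}
    {S : κ → Finset ι} {A : Finset ι} (i : κ) (hw : ∀ j ∈ A, 0 ≤ w j)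
    (hdev : ∑ j ∈ A \ (univ.erase i).biUnion S, w j ≤ α * ∑ j ∈ S i, w j) :
    ∑ j ∈ A, w j ≤ α * ∑ j ∈ S i, w j + ∑ j ∈ A ∩ univ.biUnion S, w j := by
  have hothers : ∑ j ∈ A ∩ (univ.erase i).biUnion S, w j ≤ ∑ j ∈ A ∩ univ.biUnion S, w j :=
    sum_le_sum_of_subset_of_nonneg
      (inter_subset_inter_left (biUnion_subset_biUnion_of_subset_left _ (erase_subset _ _)))
      fun j hj _ => hw j (mem_inter.1 hj).1
  linarith [sum_inter_add_sum_sdiff A ((univ.erase i).biUnion S) w]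

lemma sum_sum_inter_le_sum [Fintype κ] {w : ι → ℝ} {O : κ → Finset ι} {U : Finset ι}
    (hO : Pairwise (Disjoint on O)) (hw : ∀ j ∈ U, 0 ≤ w j) :
    ∑ i, ∑ j ∈ O i ∩ U, w j ≤ ∑ j ∈ U, w j := by
  rw [← sum_biUnion fun a _ b _ hab => (hO hab).mono inter_subset_left inter_subset_left]
  exact sum_le_sum_of_subset_of_nonneg (biUnion_subset.2 fun _ _ => inter_subset_right)
    fun j hj _ => hw j hj

theorem set_packing_poa_upper_bound_general
    {ι : Type} [DecidableEq ι] (J : Finset ι) (w : ι → ℝ)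
    (hw : ∀ j ∈ J, 0 ≤ w j) (n : ℕ)
    (𝒮 : Fin n → Set (Finset ι))
    (hJ : ∀ i, ∀ A ∈ 𝒮 i, A ⊆ J)
    (hdc : ∀ i, ∀ A ∈ 𝒮 i, ∀ T, T ⊆ A → T ∈ 𝒮 i)
    (α : ℝ)
    (S O : Fin n → Finset ι)
    (hS : ∀ i, S i ∈ 𝒮 i)
    (hSdisj : ∀ i k, i ≠ k → Disjoint (S i) (S k))
    (hO : ∀ i, O i ∈ 𝒮 i)
    (hOdisj : ∀ i k, i ≠ k → Disjoint (O i) (O k))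
    (hNash : ∀ i, ∀ T ∈ 𝒮 i, (∀ k, k ≠ i → Disjoint T (S k)) →
      ∑ j ∈ T, w j ≤ α * ∑ j ∈ S i, w j) :
    ∑ i, ∑ j ∈ O i, w j ≤ (α + 1) * ∑ i, ∑ j ∈ S i, w j := by
  set U := univ.biUnion S
  have hwU : ∀ j ∈ U, 0 ≤ w j := fun j hj =>
    have ⟨k, _, hk⟩ := mem_biUnion.1 hj
    hw j (hJ k _ (hS k) hk)
  have hdeviation : ∀ i, ∑ j ∈ O i, w j ≤ α * ∑ j ∈ S i, w j + ∑ j ∈ O i ∩ U, w j :=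
    fun i => sum_le_mul_add_sum_inter_biUnion i (fun j hj => hw j (hJ i _ (hO i) hj))
      (hNash i _ (hdc i _ (hO i) _ sdiff_subset) fun _ hk => disjoint_sdiff_biUnion_erase S _ hk)
  calc ∑ i, ∑ j ∈ O i, w j
      ≤ ∑ i, (α * ∑ j ∈ S i, w j + ∑ j ∈ O i ∩ U, w j) := sum_le_sum fun i _ => hdeviation i
    _ = α * ∑ i, ∑ j ∈ S i, w j + ∑ i, ∑ j ∈ O i ∩ U, w j := by rw [sum_add_distrib, mul_sum]
    _ ≤ α * ∑ i, ∑ j ∈ S i, w j + ∑ j ∈ U, w j := by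
      gcongr
      exact sum_sum_inter_le_sum (fun _ _ => hOdisj _ _) hwU
    _ = (α + 1) * ∑ i, ∑ j ∈ S i, w j := by
      rw [sum_biUnion fun a _ b _ => hSdisj a b]
      ring

/-- For every set packing game with `n` players, every real `α ≥ 1`,
every `α`-approximate Nash equilibrium `S` and every feasible profile `O`,
the total values satisfy `w(O) ≤ (α+1)·w(S)`. -/
theorem set_packing_poa_upper_bound
    {ι : Type} [DecidableEq ι] (J : Finset ι) (w : ι → ℝ)
    (hw : ∀ j ∈ J, 0 ≤ w j) (n : ℕ)
    (𝒮 : Fin n → Set (Finset ι))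
    (hJ : ∀ i, ∀ A ∈ 𝒮 i, A ⊆ J)
    (hdc : ∀ i, ∀ A ∈ 𝒮 i, ∀ T, T ⊆ A → T ∈ 𝒮 i)
    (hempty : ∀ i, ∅ ∈ 𝒮 i)
    (α : ℝ) (hα : 1 ≤ α)
    (S O : Fin n → Finset ι)
    (hS : ∀ i, S i ∈ 𝒮 i)
    (hSdisj : ∀ i k, i ≠ k → Disjoint (S i) (S k))
    (hO : ∀ i, O i ∈ 𝒮 i)
    (hOdisj : ∀ i k, i ≠ k → Disjoint (O i) (O k))
    (hNash : ∀ i, ∀ T ∈ 𝒮 i, (∀ k, k ≠ i → Disjoint T (S k)) →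
      ∑ j ∈ T, w j ≤ α * ∑ j ∈ S i, w j) :
    ∑ i, ∑ j ∈ O i, w j ≤ (α + 1) * ∑ i, ∑ j ∈ S i, w j :=
  set_packing_poa_upper_bound_general J w hw n 𝒮 hJ hdc α S O hS hSdisj hO hOdisj hNash
end

section
/- For all integers p ≥ q ≥ 1 there exists a set packing game with q+1 players, a feasible profile O, and a (p/q)-approximate Nash equilibrium S with w(S) > 0, such that w(O)/w(S) = (p+q)/q; hence the price of anarchy of set packing games under α-approximate Nash equilibria is at least α+1 for every rational α = p/q ≥ 1. -/
/-!
Items `1, …, q` have weight `1` and items `q + 1, …, 2q` weight `p / q`. Player `0` may take any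
set of light items; player `k + 1` may take either the light item `k + 1` or the heavy item
`q + k + 1`. When each player `k + 1` holds its light item, player `0` is blocked completely and
player `k + 1` gains only the factor `p / q` by switching to its heavy item, so this profile, of
value `q`, is a `(p / q)`-approximate equilibrium. Giving all light items to player `0` and the
heavy ones to the others has value `q + p`.
-/

open Finset Function

theorem pairwise_disjoint_fin_cons {α : Type*} [PartialOrder α] [OrderBot α] {n : ℕ} {a : α}
    {f : Fin n → α} (ha : ∀ k, Disjoint a (f k)) (hf : Pairwise (Disjoint on f)) :
    Pairwise (Disjoint on (Fin.cons a f : Fin (n + 1) → α)) :=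
  pairwise_fin_succ_iff.2 ⟨fun k => (ha k).symm, ha, fun _ _ hij => hf hij⟩

namespace SetPackingPoA

variable (p q : ℕ)

noncomputable def weight (j : ℕ) : ℝ := if j ≤ q then 1 else p / q

def bases : Fin (q + 1) → Set (Finset ℕ) :=
  Fin.cons {Icc 1 q} fun k => {{(k : ℕ) + 1}, {q + k + 1}}

def strategies (i : Fin (q + 1)) : LowerSet (Finset ℕ) := lowerClosure (bases q i)

def optimum : Fin (q + 1) → Finset ℕ := Fin.cons (Icc 1 q) fun k => {q + k + 1}

def equilibrium : Fin (q + 1) → Finset ℕ := Fin.cons ∅ fun k => {(k : ℕ) + 1}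

variable {p q}

theorem weight_nonneg (j : ℕ) : 0 ≤ weight p q j := by
  unfold weight; split_ifs <;> positivity

theorem weight_le (hq : 1 ≤ q) (hpq : q ≤ p) (j : ℕ) : weight p q j ≤ p / q := by
  unfold weight
  split_ifs
  · rw [one_le_div (by positivity)]; exact_mod_cast hpq
  · rfl

theorem sum_weight_Icc : ∑ j ∈ Icc 1 q, weight p q j = q := by
  simp only [weight]
  rw [sum_congr rfl fun j hj => if_pos (mem_Icc.1 hj).2]
  simp

theorem subset_Icc_of_mem_bases {i : Fin (q + 1)} {B : Finset ℕ} (hB : B ∈ bases q i) :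
    B ⊆ Icc 1 (2 * q) := by
  induction i using Fin.cases with
  | zero =>
    rw [bases, Fin.cons_zero, Set.mem_singleton_iff] at hB
    exact hB ▸ Icc_subset_Icc_right (by omega)
  | succ k =>
    have := k.isLt
    simp only [bases, Fin.cons_succ, Set.mem_insert_iff, Set.mem_singleton_iff] at hB
    rcases hB with rfl | rfl <;> simp only [singleton_subset_iff, mem_Icc] <;> omega

theorem subset_Icc_of_mem_strategies {i : Fin (q + 1)} {A : Finset ℕ} (hA : A ∈ strategies q i) :
    A ⊆ Icc 1 (2 * q) := by
  obtain ⟨B, hB, hAB⟩ := mem_lowerClosure.1 hA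
  exact hAB.trans (subset_Icc_of_mem_bases hB)

theorem empty_mem_strategies (i : Fin (q + 1)) : ∅ ∈ strategies q i := by
  obtain ⟨B, hB⟩ : (bases q i).Nonempty := by
    induction i using Fin.cases <;> simp [bases]
  exact mem_lowerClosure.2 ⟨B, hB, empty_subset B⟩

theorem optimum_mem_strategies (i : Fin (q + 1)) : optimum q i ∈ strategies q i := by
  refine subset_lowerClosure ?_
  induction i using Fin.cases <;> simp [optimum, bases]

theorem equilibrium_mem_strategies (i : Fin (q + 1)) : equilibrium q i ∈ strategies q i := by
  induction i using Fin.cases with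
  | zero => exact empty_mem_strategies 0
  | succ k => exact subset_lowerClosure (by simp [equilibrium, bases])

theorem pairwise_disjoint_optimum : Pairwise (Disjoint on optimum q) := by
  refine pairwise_disjoint_fin_cons (fun k => ?_) fun k l hkl => ?_
  · simp
  · simpa [add_right_comm] using Fin.val_injective.ne hkl

theorem pairwise_disjoint_equilibrium : Pairwise (Disjoint on equilibrium q) := by
  refine pairwise_disjoint_fin_cons (fun k => disjoint_bot_left) fun k l hkl => ?_
  simpa using Fin.val_injective.ne hkl

theorem sum_weight_equilibrium_succ (k : Fin q) :
    ∑ j ∈ equilibrium q k.succ, weight p q j = 1 := by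
  simp [equilibrium, weight]

theorem sum_weight_equilibrium : ∑ i, ∑ j ∈ equilibrium q i, weight p q j = q := by
  rw [Fin.sum_univ_succ]
  simp only [sum_weight_equilibrium_succ]
  simp [equilibrium]

theorem sum_weight_optimum (hq : 1 ≤ q) : ∑ i, ∑ j ∈ optimum q i, weight p q j = p + q := by
  have heavy (k : Fin q) : weight p q (q + k + 1) = p / q := if_neg (by omega)
  rw [Fin.sum_univ_succ]
  simp only [optimum, Fin.cons_zero, Fin.cons_succ, sum_singleton, sum_weight_Icc, heavy,
    sum_const, card_univ, Fintype.card_fin, nsmul_eq_mul]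
  rw [mul_div_cancel₀ _ (by positivity), add_comm]

theorem eq_empty_of_disjoint_equilibrium {T : Finset ℕ} (hT : T ∈ strategies q 0)
    (hdisj : ∀ k, k ≠ 0 → Disjoint T (equilibrium q k)) : T = ∅ := by
  obtain ⟨B, hB, hTB⟩ := mem_lowerClosure.1 hT
  rw [bases, Fin.cons_zero, Set.mem_singleton_iff] at hB
  refine eq_empty_of_forall_notMem fun j hj => ?_
  obtain ⟨hj1, hjq⟩ := mem_Icc.1 (hB ▸ hTB hj)
  -- the light item `j` is held by player `j`
  have := hdisj (Fin.succ ⟨j - 1, by omega⟩) (Fin.succ_ne_zero _)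
  simp only [equilibrium, Fin.cons_succ, disjoint_singleton_right] at this
  exact this (by rwa [Nat.sub_add_cancel hj1])

theorem exists_subset_singleton_of_mem_strategies_succ {k : Fin q} {T : Finset ℕ}
    (hT : T ∈ strategies q k.succ) : ∃ x, T ⊆ {x} := by
  obtain ⟨B, hB, hTB⟩ := mem_lowerClosure.1 hT
  simp only [bases, Fin.cons_succ, Set.mem_insert_iff, Set.mem_singleton_iff] at hB
  rcases hB with rfl | rfl
  exacts [⟨_, hTB⟩, ⟨_, hTB⟩]

theorem sum_weight_le_of_disjoint_equilibrium (hq : 1 ≤ q) (hpq : q ≤ p) {i : Fin (q + 1)}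
    {T : Finset ℕ} (hT : T ∈ strategies q i) (hdisj : ∀ k, k ≠ i → Disjoint T (equilibrium q k)) :
    ∑ j ∈ T, weight p q j ≤ p / q * ∑ j ∈ equilibrium q i, weight p q j := by
  induction i using Fin.cases with
  | zero =>
    rw [eq_empty_of_disjoint_equilibrium hT hdisj]
    simp [equilibrium]
  | succ k =>
    obtain ⟨x, hTx⟩ := exists_subset_singleton_of_mem_strategies_succ hT
    calc ∑ j ∈ T, weight p q j
        ≤ ∑ j ∈ {x}, weight p q j :=
          sum_le_sum_of_subset_of_nonneg hTx fun j _ _ => weight_nonneg j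
      _ = weight p q x := sum_singleton _ _
      _ ≤ p / q := weight_le hq hpq x
      _ = p / q * ∑ j ∈ equilibrium q k.succ, weight p q j := by
          rw [sum_weight_equilibrium_succ, mul_one]

end SetPackingPoA

open SetPackingPoA in
/-- For all integers `p ≥ q ≥ 1` there exists a set packing game with
`q+1` players, a feasible profile `O`, and a `(p/q)`-approximate Nash equilibrium `S`
with `w(S) > 0`, such that `w(O)/w(S) = (p+q)/q`; hence the price of anarchy of set
packing games under `α`-approximate Nash equilibria is at least `α+1` for every
rational `α = p/q ≥ 1`. -/
theorem set_packing_poa_lower_bound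
    (p q : ℕ) (hq : 1 ≤ q) (hpq : q ≤ p) :
    ∃ (J : Finset ℕ) (w : ℕ → ℝ) (𝒮 : Fin (q + 1) → Set (Finset ℕ))
      (O S : Fin (q + 1) → Finset ℕ),
      (∀ j ∈ J, 0 ≤ w j) ∧
      (∀ i, ∀ A ∈ 𝒮 i, A ⊆ J) ∧
      (∀ i, ∀ A ∈ 𝒮 i, ∀ T, T ⊆ A → T ∈ 𝒮 i) ∧
      (∀ i, ∅ ∈ 𝒮 i) ∧
      -- O is a feasible profile
      (∀ i, O i ∈ 𝒮 i) ∧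
      (∀ i k, i ≠ k → Disjoint (O i) (O k)) ∧
      -- S is a feasible profile
      (∀ i, S i ∈ 𝒮 i) ∧
      (∀ i k, i ≠ k → Disjoint (S i) (S k)) ∧
      -- S is a (p/q)-approximate Nash equilibrium
      (∀ i, ∀ T ∈ 𝒮 i, (∀ k, k ≠ i → Disjoint T (S k)) →
        ∑ j ∈ T, w j ≤ ((p : ℝ) / q) * ∑ j ∈ S i, w j) ∧
      -- positive value and ratio exactly (p+q)/q
      0 < ∑ i, ∑ j ∈ S i, w j ∧
      (∑ i, ∑ j ∈ O i, w j) / (∑ i, ∑ j ∈ S i, w j) = ((p : ℝ) + q) / q := by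
  refine ⟨Icc 1 (2 * q), weight p q, fun i => strategies q i, optimum q, equilibrium q,
    fun j _ => weight_nonneg j, fun _ _ => subset_Icc_of_mem_strategies,
    fun i _ hA _ hTA => (strategies q i).lower hTA hA, empty_mem_strategies,
    optimum_mem_strategies, pairwise_disjoint_optimum, equilibrium_mem_strategies,
    pairwise_disjoint_equilibrium, fun _ _ => sum_weight_le_of_disjoint_equilibrium hq hpq,
    ?_, ?_⟩
  · rw [sum_weight_equilibrium]
    exact_mod_cast hq
  · rw [sum_weight_optimum hq, sum_weight_equilibrium]
end

section
/- For all integers p ≥ q ≥ 1 there exists a set packing game with q+1 players, a feasible profile O, and a feasible profile S with w(S) > 0 satisfying the sequential (p/q)-greedy condition with respect to the player order 1,…,q+1, such that w(O)/w(S) = (p+q)/q; hence the sequential price of anarchy of set packing games under α-approximate subgame perfect equilibria is at least α+1 for every rational α = p/q ≥ 1. -/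
/-!
Take items `0, …, q`, item `0` of weight `p` and the others of weight `1`. Player `0` may take
either item `0` or any set of the items `1, …, q`; player `i ≥ 1` may take only item `i`.
If player `0` moves first and takes the items `1, …, q` (worth `q`, within the factor `p / q` of
her best option `p`), every later player is blocked, so `S` is worth `q`; giving item `i` to
player `i` for every `i` is worth `p + q`.
-/

open Finset

theorem Finset.sum_le_of_mem_lowerClosure {α M : Type*} [AddCommMonoid M] [Preorder M]
    [AddLeftMono M] {w : α → M} (hw : ∀ j, 0 ≤ w j)
    {B : Set (Finset α)} {c : M} (hB : ∀ b ∈ B, ∑ j ∈ b, w j ≤ c) {T : Finset α}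
    (hT : T ∈ lowerClosure B) : ∑ j ∈ T, w j ≤ c := by
  obtain ⟨b, hb, hTb⟩ := mem_lowerClosure.1 hT
  exact (sum_le_sum_of_subset_of_nonneg hTb fun j _ _ => hw j).trans (hB b hb)

namespace SetPackingSeqPoA

def weight (p j : ℕ) : ℝ := if j = 0 then p else 1

def bundles (q : ℕ) (i : Fin (q + 1)) : Set (Finset ℕ) :=
  if i = 0 then {Icc 1 q, {0}} else {{(i : ℕ)}}

def strategies (q : ℕ) (i : Fin (q + 1)) : Set (Finset ℕ) := lowerClosure (bundles q i)

def optimum (q : ℕ) (i : Fin (q + 1)) : Finset ℕ := {(i : ℕ)}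

def greedy (q : ℕ) (i : Fin (q + 1)) : Finset ℕ := if i = 0 then Icc 1 q else ∅

variable {p q : ℕ}

theorem weight_nonneg (j : ℕ) : 0 ≤ weight p j := by
  unfold weight; split_ifs <;> positivity

theorem sum_weight_of_zero_notMem {A : Finset ℕ} (hA : 0 ∉ A) :
    ∑ j ∈ A, weight p j = A.card := by
  rw [sum_congr rfl fun j hj => show weight p j = 1 from if_neg (ne_of_mem_of_not_mem hj hA),
    sum_const, nsmul_one]

theorem sum_weight_Icc : ∑ j ∈ Icc 1 q, weight p j = q := by
  rw [sum_weight_of_zero_notMem (by simp), Nat.card_Icc, Nat.add_sub_cancel]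

theorem bundle_subset_range {i : Fin (q + 1)} {b : Finset ℕ} (hb : b ∈ bundles q i) :
    b ⊆ range (q + 1) := by
  unfold bundles at hb
  split_ifs at hb
  · rcases hb with rfl | rfl <;> intro j hj <;> simp at hj ⊢ <;> omega
  · rw [Set.mem_singleton_iff.1 hb, singleton_subset_iff, mem_range]
    exact i.isLt

theorem subset_range_of_mem_strategies {i : Fin (q + 1)} {A : Finset ℕ}
    (hA : A ∈ strategies q i) : A ⊆ range (q + 1) := by
  obtain ⟨b, hb, hAb⟩ := mem_lowerClosure.1 hA
  exact hAb.trans (bundle_subset_range hb)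

theorem empty_mem_strategies (i : Fin (q + 1)) : ∅ ∈ strategies q i := by
  refine mem_lowerClosure.2 ?_
  unfold bundles
  split_ifs
  · exact ⟨{0}, by simp, empty_subset _⟩
  · exact ⟨{(i : ℕ)}, rfl, empty_subset _⟩

theorem optimum_mem_strategies (i : Fin (q + 1)) : optimum q i ∈ strategies q i := by
  refine subset_lowerClosure ?_
  unfold bundles optimum
  split_ifs with hi
  · simp [hi]
  · rfl

theorem greedy_mem_strategies (i : Fin (q + 1)) : greedy q i ∈ strategies q i := by
  unfold greedy
  split_ifs with hi
  · subst hi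
    exact subset_lowerClosure (by simp [bundles])
  · exact empty_mem_strategies i

theorem optimum_disjoint {i k : Fin (q + 1)} (hik : i ≠ k) :
    Disjoint (optimum q i) (optimum q k) := by
  simpa [optimum, Fin.val_eq_val] using hik

theorem greedy_disjoint {i k : Fin (q + 1)} (hik : i ≠ k) :
    Disjoint (greedy q i) (greedy q k) := by
  unfold greedy
  split_ifs with hi hk <;> simp_all

theorem sum_weight_le_of_mem_strategies_zero (hpq : q ≤ p) {T : Finset ℕ}
    (hT : T ∈ strategies q 0) : ∑ j ∈ T, weight p j ≤ p := by
  refine sum_le_of_mem_lowerClosure weight_nonneg (fun b hb => ?_) hT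
  simp only [bundles, if_pos, Set.mem_insert_iff, Set.mem_singleton_iff] at hb
  rcases hb with rfl | rfl
  · rw [sum_weight_Icc]; exact_mod_cast hpq
  · simp [weight]

/-- A later player finds her only item already taken by player `0`. -/
theorem eq_empty_of_mem_strategies_of_subset {i : Fin (q + 1)} (hi : i ≠ 0) {T : Finset ℕ}
    (hT : T ∈ strategies q i)
    (hTfree : T ⊆ range (q + 1) \ (univ.filter (· < i)).biUnion (greedy q)) : T = ∅ := by
  obtain ⟨b, hb, hTb⟩ := mem_lowerClosure.1 hT
  simp only [bundles, if_neg hi, Set.mem_singleton_iff] at hb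
  subst hb
  refine subset_empty.1 fun j hj => ?_
  have hji : j = i := mem_singleton.1 (hTb hj)
  have hi_pos : (0 : ℕ) < i := Fin.pos_iff_ne_zero.2 hi
  refine ((mem_sdiff.1 (hTfree hj)).2 (mem_biUnion.2 ⟨0, by simpa using hi_pos, ?_⟩)).elim
  simp only [greedy, if_pos, mem_Icc, hji]
  omega

theorem sum_weight_le_div_mul_sum_greedy (hq : 1 ≤ q) (hpq : q ≤ p) (i : Fin (q + 1)) {T : Finset ℕ}
    (hT : T ∈ strategies q i)
    (hTfree : T ⊆ range (q + 1) \ (univ.filter (· < i)).biUnion (greedy q)) :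
    ∑ j ∈ T, weight p j ≤ ((p : ℝ) / q) * ∑ j ∈ greedy q i, weight p j := by
  by_cases hi : i = 0
  · subst hi
    have hq0 : (q : ℝ) ≠ 0 := by positivity
    rw [greedy, if_pos rfl, sum_weight_Icc, div_mul_cancel₀ _ hq0]
    exact sum_weight_le_of_mem_strategies_zero hpq hT
  · simp [greedy, hi, eq_empty_of_mem_strategies_of_subset hi hT hTfree]

theorem sum_optimum : ∑ i, ∑ j ∈ optimum q i, weight p j = p + q := by
  simp [optimum, Fin.sum_univ_succ, weight]

theorem sum_greedy : ∑ i, ∑ j ∈ greedy q i, weight p j = q := by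
  simp [greedy, Fin.sum_univ_succ, sum_weight_Icc]

end SetPackingSeqPoA

open SetPackingSeqPoA in
/-- For all integers `p ≥ q ≥ 1` there exists a set packing game with
`q+1` players, a feasible profile `O`, and a feasible profile `S` with `w(S) > 0`
satisfying the sequential `(p/q)`-greedy condition with respect to the player order
`1,…,q+1`, such that `w(O)/w(S) = (p+q)/q`; hence the sequential price of anarchy of
set packing games under `α`-approximate subgame perfect equilibria is at least `α+1`
for every rational `α = p/q ≥ 1`. -/
theorem set_packing_seq_poa_lower_bound
    (p q : ℕ) (hq : 1 ≤ q) (hpq : q ≤ p) :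
    ∃ (J : Finset ℕ) (w : ℕ → ℝ) (𝒮 : Fin (q + 1) → Set (Finset ℕ))
      (O S : Fin (q + 1) → Finset ℕ),
      (∀ j ∈ J, 0 ≤ w j) ∧
      (∀ i, ∀ A ∈ 𝒮 i, A ⊆ J) ∧
      (∀ i, ∀ A ∈ 𝒮 i, ∀ T, T ⊆ A → T ∈ 𝒮 i) ∧
      (∀ i, ∅ ∈ 𝒮 i) ∧
      -- O is a feasible profile
      (∀ i, O i ∈ 𝒮 i) ∧
      (∀ i k, i ≠ k → Disjoint (O i) (O k)) ∧
      -- S is a feasible profile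
      (∀ i, S i ∈ 𝒮 i) ∧
      (∀ i k, i ≠ k → Disjoint (S i) (S k)) ∧
      -- S satisfies the sequential (p/q)-greedy condition w.r.t. the order 1,…,q+1
      (∀ i, ∀ T ∈ 𝒮 i, T ⊆ J \ ((Finset.univ.filter (fun j => j < i)).biUnion S) →
        ∑ j ∈ T, w j ≤ ((p : ℝ) / q) * ∑ j ∈ S i, w j) ∧
      -- positive value and ratio exactly (p+q)/q
      0 < ∑ i, ∑ j ∈ S i, w j ∧
      (∑ i, ∑ j ∈ O i, w j) / (∑ i, ∑ j ∈ S i, w j) = ((p : ℝ) + q) / q := by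
  refine ⟨range (q + 1), weight p, strategies q, optimum q, greedy q,
    fun j _ => weight_nonneg j, fun _ _ => subset_range_of_mem_strategies,
    fun i _ hA _ hTA => (lowerClosure (bundles q i)).lower hTA hA, empty_mem_strategies,
    optimum_mem_strategies, fun _ _ => optimum_disjoint, greedy_mem_strategies,
    fun _ _ => greedy_disjoint, fun i _ => sum_weight_le_div_mul_sum_greedy hq hpq i, ?_, ?_⟩
  · rw [sum_greedy]; exact_mod_cast hq
  · rw [sum_optimum, sum_greedy]
end

section
/- For all integers p ≥ q ≥ 1 and every integer n ≥ 1, there exists a symmetric set packing game with n players (a single common downward-closed collection 𝒮_i = 𝒮 for all players), a feasible profile O, and a (p/q)-approximate Nash equilibrium S with w(S) > 0, such that w(O)/w(S) = (p·n + q·(n−1))/(q·n); consequently, as n → ∞, the price of anarchy of symmetric set packing games under α-approximate Nash equilibria with α = p/q is at least α+1. -/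
/-!
Player `i < n` holds in `S` the single item `i`, of weight `q`. In `O`, player `0` takes
`{0, …, n}`, where the extra item `n` weighs `p - q`, and every player `i ≥ 1` takes a
private item `n + i` of weight `p`. The strategies are exactly the subsets of the sets of `O`.
A deviation of player `i` that avoids the items of the others can only use the items `i` and
`n`, or a single private item, so it is worth at most `p = (p/q)·q`. On the other hand
`w(O) = nq + (p - q) + (n - 1)p` and `w(S) = nq`.
-/

open Finset

namespace SetPackingPoALowerBound

variable {p q : ℝ} {n : ℕ}

def weight (p q : ℝ) (n j : ℕ) : ℝ :=
  if j < n then q else if j = n then p - q else p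

def optProfile (n : ℕ) (i : Fin n) : Finset ℕ :=
  if (i : ℕ) = 0 then range (n + 1) else {n + i}

def nashProfile (n : ℕ) (i : Fin n) : Finset ℕ := {(i : ℕ)}

def strategies (n : ℕ) : Set (Finset ℕ) := lowerClosure (Set.range (optProfile n))

lemma weight_nonneg (hq : 0 ≤ q) (hpq : q ≤ p) (j : ℕ) : 0 ≤ weight p q n j := by
  unfold weight
  split_ifs <;> linarith

lemma weight_of_lt {j : ℕ} (hj : j < n) : weight p q n j = q := if_pos hj

lemma weight_self : weight p q n n = p - q := by simp [weight]

lemma weight_of_gt {j : ℕ} (hj : n < j) : weight p q n j = p := by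
  simp [weight, hj.ne', hj.not_gt]

lemma sum_weight_range : ∑ j ∈ range (n + 1), weight p q n j = n * q + (p - q) := by
  rw [sum_range_succ, weight_self, sum_congr rfl fun j hj => weight_of_lt (mem_range.mp hj)]
  simp

lemma optProfile_subset_range (i : Fin n) : optProfile n i ⊆ range (2 * n) := by
  unfold optProfile
  split_ifs <;> intro x <;> simp <;> omega

lemma optProfile_disjoint {i k : Fin n} (h : i ≠ k) :
    Disjoint (optProfile n i) (optProfile n k) := by
  have hik : (i : ℕ) ≠ k := Fin.val_ne_of_ne h
  unfold optProfile
  split_ifs <;> simp [Finset.disjoint_left] <;> omega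

lemma nashProfile_disjoint {i k : Fin n} (h : i ≠ k) :
    Disjoint (nashProfile n i) (nashProfile n k) :=
  disjoint_singleton.mpr (Fin.val_ne_of_ne h)

lemma mem_strategies {T : Finset ℕ} : T ∈ strategies n ↔ ∃ i, T ⊆ optProfile n i := by
  simp [strategies]

lemma optProfile_mem_strategies (i : Fin n) : optProfile n i ∈ strategies n :=
  mem_strategies.mpr ⟨i, subset_rfl⟩

lemma nashProfile_mem_strategies (i : Fin n) : nashProfile n i ∈ strategies n :=
  mem_strategies.mpr ⟨⟨0, i.pos⟩, by simp [nashProfile, optProfile]⟩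

lemma empty_mem_strategies (hn : 1 ≤ n) : ∅ ∈ strategies n :=
  mem_strategies.mpr ⟨⟨0, hn⟩, empty_subset _⟩

lemma strategies_subset_range {T : Finset ℕ} (hT : T ∈ strategies n) : T ⊆ range (2 * n) := by
  obtain ⟨i, hi⟩ := mem_strategies.mp hT
  exact hi.trans (optProfile_subset_range i)

lemma sum_weight_nashProfile (i : Fin n) : ∑ j ∈ nashProfile n i, weight p q n j = q := by
  rw [nashProfile, sum_singleton, weight_of_lt i.isLt]

lemma sum_sum_weight_nashProfile : ∑ i, ∑ j ∈ nashProfile n i, weight p q n j = q * n := by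
  simp [sum_weight_nashProfile, mul_comm]

lemma sum_sum_weight_optProfile (hn : 1 ≤ n) :
    ∑ i, ∑ j ∈ optProfile n i, weight p q n j = p * n + q * (n - 1) := by
  obtain ⟨m, rfl⟩ : ∃ m, n = m + 1 := ⟨n - 1, by omega⟩
  have hprivate (i : Fin m) : ∑ j ∈ optProfile (m + 1) i.succ, weight p q (m + 1) j = p := by
    rw [optProfile, if_neg (by simp), sum_singleton,
      weight_of_gt (by simp)]
  rw [Fin.sum_univ_succ, sum_congr rfl fun i _ => hprivate i]
  simp only [optProfile, Fin.val_zero, if_true, sum_weight_range, sum_const, card_univ,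
    Fintype.card_fin, nsmul_eq_mul]
  push_cast
  ring

lemma subset_pair_of_disjoint_nashProfile {i : Fin n} {T : Finset ℕ} (hT : T ⊆ range (n + 1))
    (hdisj : ∀ k, k ≠ i → Disjoint T (nashProfile n k)) : T ⊆ {(i : ℕ), n} := by
  intro x hx
  have hxn : x < n + 1 := mem_range.mp (hT hx)
  rcases lt_or_eq_of_le (Nat.lt_succ_iff.mp hxn) with hlt | rfl
  · by_cases hxi : x = i
    · simp [hxi]
    · have := disjoint_left.mp (hdisj ⟨x, hlt⟩ fun h => hxi (congrArg Fin.val h)) hx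
      simp [nashProfile] at this
  · simp

lemma sum_weight_le_of_disjoint_nashProfile (hq : 0 ≤ q) (hpq : q ≤ p) {i : Fin n}
    {T : Finset ℕ} (hT : T ∈ strategies n) (hdisj : ∀ k, k ≠ i → Disjoint T (nashProfile n k)) :
    ∑ j ∈ T, weight p q n j ≤ p := by
  have hmono {A : Finset ℕ} (hA : T ⊆ A) := sum_le_sum_of_subset_of_nonneg hA
    fun j _ _ => weight_nonneg (n := n) hq hpq j
  obtain ⟨i', hi'⟩ := mem_strategies.mp hT
  unfold optProfile at hi'
  split_ifs at hi' with h0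
  · calc ∑ j ∈ T, weight p q n j ≤ ∑ j ∈ {(i : ℕ), n}, weight p q n j :=
          hmono (subset_pair_of_disjoint_nashProfile hi' hdisj)
      _ = p := by
          rw [sum_pair i.isLt.ne, weight_of_lt i.isLt, weight_self]
          ring
  · calc ∑ j ∈ T, weight p q n j ≤ ∑ j ∈ {n + (i' : ℕ)}, weight p q n j := hmono hi'
      _ = p := by rw [sum_singleton, weight_of_gt (by omega)]

end SetPackingPoALowerBound

open SetPackingPoALowerBound in
/-- For all integers `p ≥ q ≥ 1` and every integer `n ≥ 1`, there
exists a symmetric set packing game with `n` players (a single common downward-closed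
collection `𝒮` for all players), a feasible profile `O`, and a `(p/q)`-approximate
Nash equilibrium `S` with `w(S) > 0`, such that
`w(O)/w(S) = (p·n + q·(n−1))/(q·n)`; consequently, as `n → ∞`, the price of anarchy of
symmetric set packing games under `α`-approximate Nash equilibria with `α = p/q` is at
least `α+1`. -/
theorem symmetric_set_packing_poa_lower_bound
    (p q n : ℕ) (hq : 1 ≤ q) (hpq : q ≤ p) (hn : 1 ≤ n) :
    ∃ (J : Finset ℕ) (w : ℕ → ℝ) (𝒮 : Set (Finset ℕ))
      (O S : Fin n → Finset ℕ),
      (∀ j ∈ J, 0 ≤ w j) ∧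
      (∀ A ∈ 𝒮, A ⊆ J) ∧
      (∀ A ∈ 𝒮, ∀ T, T ⊆ A → T ∈ 𝒮) ∧
      (∅ ∈ 𝒮) ∧
      -- O is a feasible profile (all players share the collection 𝒮)
      (∀ i, O i ∈ 𝒮) ∧
      (∀ i k, i ≠ k → Disjoint (O i) (O k)) ∧
      -- S is a feasible profile
      (∀ i, S i ∈ 𝒮) ∧
      (∀ i k, i ≠ k → Disjoint (S i) (S k)) ∧
      -- S is a (p/q)-approximate Nash equilibrium
      (∀ i, ∀ T ∈ 𝒮, (∀ k, k ≠ i → Disjoint T (S k)) →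
        ∑ j ∈ T, w j ≤ ((p : ℝ) / q) * ∑ j ∈ S i, w j) ∧
      -- positive value and ratio exactly (p·n + q·(n−1))/(q·n)
      0 < ∑ i, ∑ j ∈ S i, w j ∧
      (∑ i, ∑ j ∈ O i, w j) / (∑ i, ∑ j ∈ S i, w j)
        = ((p : ℝ) * n + q * ((n : ℝ) - 1)) / (q * n) := by
  have hq' : (0 : ℝ) < q := by exact_mod_cast hq
  have hpq' : (q : ℝ) ≤ p := by exact_mod_cast hpq
  refine ⟨range (2 * n), weight p q n, strategies n, optProfile n, nashProfile n,
    fun j _ => weight_nonneg hq'.le hpq' j, fun A => strategies_subset_range,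
    fun A hA T hT => (lowerClosure _).lower hT hA, empty_mem_strategies hn,
    optProfile_mem_strategies, fun i k => optProfile_disjoint, nashProfile_mem_strategies,
    fun i k => nashProfile_disjoint, ?_, ?_, ?_⟩
  · intro i T hT hdisj
    rw [sum_weight_nashProfile, div_mul_cancel₀ _ hq'.ne']
    exact sum_weight_le_of_disjoint_nashProfile hq'.le hpq' hT hdisj
  · rw [sum_sum_weight_nashProfile]
    have : (0 : ℝ) < n := by exact_mod_cast hn
    positivity
  · rw [sum_sum_weight_optProfile hn, sum_sum_weight_nashProfile]
end

section
/- For every real α ≥ 1 and every ε > 0 there exist an integer n ≥ 1, a symmetric set packing game with n players (a single common downward-closed collection 𝒮_i = 𝒮 for all players), a feasible profile O, and a feasible profile S with w(S) > 0 satisfying the sequential α-greedy condition with respect to the player order 1,…,n, such that w(O)/w(S) ≥ e^{1/α}/(e^{1/α}−1) − ε; hence the sequential price of anarchy of symmetric set packing games under α-approximate subgame perfect equilibria is at least e^{1/α}/(e^{1/α}−1). -/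
/-!
Take an `n × n` grid of items plus one bonus item per row, encode item `(j, k)` as
`Nat.pair j k` with the bonus item of row `j` in column `n`, and let the admissible sets be the
subsets of a full row or of a column `k < n`. With `q = 1 - 1/(α n)`, grid cells in column `k`
weigh `(1 - q) q ^ k` and bonus items weigh `q ^ n`, so every row weighs `1` and the part of a row
not yet touched by columns `0, …, i - 1` weighs `q ^ i`, which is exactly `α` times the weight
`n (1 - q) q ^ i` of column `i`. Hence the columns, played in order, form an `α`-greedy profile of
value `n (1 - q ^ n)`, while the rows form a profile of value `n`; the ratio `(1 - q ^ n)⁻¹`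
tends to `(1 - e^{-1/α})⁻¹ = e^{1/α} / (e^{1/α} - 1)`.
-/

open Finset Filter Topology

namespace SetPackingGrid

def levelWeight (n : ℕ) (q : ℝ) (k : ℕ) : ℝ := if k < n then (1 - q) * q ^ k else q ^ n

def weight (n : ℕ) (q : ℝ) (m : ℕ) : ℝ := levelWeight n q m.unpair.2

def rowFrom (n i j : ℕ) : Finset ℕ := (Ico i (n + 1)).image (Nat.pair j)

def column (n k : ℕ) : Finset ℕ := (range n).image (Nat.pair · k)

def ground (n : ℕ) : Finset ℕ := (range n).biUnion (rowFrom n 0)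

def admissible (n : ℕ) : Set (Finset ℕ) :=
  {T | (∃ j < n, T ⊆ rowFrom n 0 j) ∨ (∃ k < n, T ⊆ column n k)}

variable {n : ℕ} {q : ℝ}

lemma levelWeight_of_lt {k : ℕ} (hk : k < n) : levelWeight n q k = (1 - q) * q ^ k := if_pos hk

@[simp] lemma weight_pair (j k : ℕ) : weight n q (Nat.pair j k) = levelWeight n q k := by
  simp [weight]

lemma levelWeight_nonneg (hq₀ : 0 ≤ q) (hq₁ : q ≤ 1) (k : ℕ) :
    0 ≤ levelWeight n q k := by
  unfold levelWeight
  split_ifs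
  · exact mul_nonneg (sub_nonneg.2 hq₁) (pow_nonneg hq₀ k)
  · exact pow_nonneg hq₀ n

lemma weight_nonneg (hq₀ : 0 ≤ q) (hq₁ : q ≤ 1) (m : ℕ) : 0 ≤ weight n q m :=
  levelWeight_nonneg hq₀ hq₁ _

lemma sum_weight_mono (hq₀ : 0 ≤ q) (hq₁ : q ≤ 1) {T U : Finset ℕ} (h : T ⊆ U) :
    ∑ m ∈ T, weight n q m ≤ ∑ m ∈ U, weight n q m :=
  sum_le_sum_of_subset_of_nonneg h fun m _ _ => weight_nonneg hq₀ hq₁ m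

lemma sum_levelWeight_Ico {i : ℕ} (hi : i ≤ n) :
    ∑ k ∈ Ico i (n + 1), levelWeight n q k = q ^ i := by
  rw [sum_Ico_succ_top hi, levelWeight, if_neg n.lt_irrefl,
    sum_congr rfl fun k hk => levelWeight_of_lt (mem_Ico.1 hk).2, ← mul_sum, mul_comm,
    geom_sum_Ico_mul_neg q hi, sub_add_cancel]

lemma sum_rowFrom {i : ℕ} (hi : i ≤ n) (j : ℕ) :
    ∑ m ∈ rowFrom n i j, weight n q m = q ^ i := by
  rw [rowFrom, sum_image fun _ _ _ _ h => (Nat.pair_eq_pair.1 h).2]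
  simpa using sum_levelWeight_Ico hi

lemma sum_column {k : ℕ} (hk : k < n) :
    ∑ m ∈ column n k, weight n q m = n * ((1 - q) * q ^ k) := by
  rw [column, sum_image fun _ _ _ _ h => (Nat.pair_eq_pair.1 h).1]
  simp [levelWeight_of_lt hk]

lemma sum_rows : ∑ j : Fin n, ∑ m ∈ rowFrom n 0 j, weight n q m = n := by
  simp [sum_rowFrom (Nat.zero_le n)]

lemma sum_columns : ∑ k : Fin n, ∑ m ∈ column n k, weight n q m = n * (1 - q ^ n) := by
  rw [sum_congr rfl fun k _ => sum_column k.isLt, Fin.sum_univ_eq_sum_range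
    (fun k => (n : ℝ) * ((1 - q) * q ^ k)), ← mul_sum, ← mul_sum, mul_comm (1 - q),
    ← Nat.Ico_zero_eq_range, geom_sum_Ico_mul_neg q n.zero_le, pow_zero]

lemma rowFrom_subset_ground {j : ℕ} (hj : j < n) : rowFrom n 0 j ⊆ ground n :=
  subset_biUnion_of_mem (rowFrom n 0) (mem_range.2 hj)

lemma column_subset_ground {k : ℕ} (hk : k < n) : column n k ⊆ ground n := by
  intro m hm
  obtain ⟨j, hj, rfl⟩ := mem_image.1 hm
  exact rowFrom_subset_ground (mem_range.1 hj)
    (mem_image_of_mem _ (mem_Ico.2 ⟨k.zero_le, by omega⟩))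

lemma subset_ground_of_mem_admissible {T : Finset ℕ} (hT : T ∈ admissible n) :
    T ⊆ ground n := by
  rcases hT with ⟨j, hj, hT⟩ | ⟨k, hk, hT⟩
  · exact hT.trans (rowFrom_subset_ground hj)
  · exact hT.trans (column_subset_ground hk)

lemma mem_admissible_of_subset {T U : Finset ℕ} (hU : U ∈ admissible n) (hTU : T ⊆ U) :
    T ∈ admissible n := by
  rcases hU with ⟨j, hj, hU⟩ | ⟨k, hk, hU⟩
  · exact Or.inl ⟨j, hj, hTU.trans hU⟩
  · exact Or.inr ⟨k, hk, hTU.trans hU⟩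

lemma disjoint_rowFrom {j j' : ℕ} (h : j ≠ j') : Disjoint (rowFrom n 0 j) (rowFrom n 0 j') := by
  simp only [rowFrom, disjoint_left, mem_image]
  rintro _ ⟨k, -, rfl⟩ ⟨k', -, hk⟩
  exact h (Nat.pair_eq_pair.1 hk).1.symm

lemma disjoint_column {k k' : ℕ} (h : k ≠ k') : Disjoint (column n k) (column n k') := by
  simp only [column, disjoint_left, mem_image]
  rintro _ ⟨j, -, rfl⟩ ⟨j', -, hj⟩
  exact h (Nat.pair_eq_pair.1 hj).2.symm

def takenBefore (i : Fin n) : Finset ℕ :=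
  (univ.filter fun k => k < i).biUnion fun k : Fin n => column n k

lemma pair_mem_takenBefore {i : Fin n} {j k : ℕ} (hj : j < n) (hk : k < i) :
    Nat.pair j k ∈ takenBefore i :=
  mem_biUnion.2 ⟨⟨k, hk.trans i.isLt⟩, mem_filter.2 ⟨mem_univ _, hk⟩,
    mem_image_of_mem _ (mem_range.2 hj)⟩

lemma subset_rowFrom_of_disjoint_takenBefore {i : Fin n} {j : ℕ} (hj : j < n) {T : Finset ℕ}
    (hT : T ⊆ rowFrom n 0 j) (hdisj : Disjoint T (takenBefore i)) :
    T ⊆ rowFrom n i j := by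
  intro m hm
  obtain ⟨k, hk, rfl⟩ := mem_image.1 (hT hm)
  refine mem_image_of_mem _ (mem_Ico.2 ⟨not_lt.1 fun hki => ?_, (mem_Ico.1 hk).2⟩)
  exact disjoint_left.1 hdisj hm (pair_mem_takenBefore hj hki)

lemma eq_empty_of_subset_column_of_disjoint_takenBefore {i : Fin n} {k : ℕ} (hki : k < i)
    {T : Finset ℕ} (hT : T ⊆ column n k) (hdisj : Disjoint T (takenBefore i)) : T = ∅ := by
  refine eq_empty_of_forall_notMem fun m hm => ?_
  obtain ⟨j, hj, rfl⟩ := mem_image.1 (hT hm)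
  exact disjoint_left.1 hdisj hm (pair_mem_takenBefore (mem_range.1 hj) hki)

lemma sum_le_mul_sum_column {α : ℝ} (hα : 1 ≤ α) (hq₀ : 0 ≤ q) (hq₁ : q ≤ 1)
    (hcol : 1 ≤ α * (n * (1 - q))) (i : Fin n) {T : Finset ℕ} (hT : T ∈ admissible n)
    (hdisj : Disjoint T (takenBefore i)) :
    ∑ m ∈ T, weight n q m ≤ α * ∑ m ∈ column n i, weight n q m := by
  have hqi : 0 ≤ q ^ (i : ℕ) := pow_nonneg hq₀ _
  have hcol₀ : 0 ≤ (n : ℝ) * (1 - q) := mul_nonneg n.cast_nonneg (sub_nonneg.2 hq₁)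
  rw [sum_column i.isLt, ← mul_assoc, ← mul_assoc]
  rcases hT with ⟨j, hj, hT⟩ | ⟨k, hk, hT⟩
  · calc ∑ m ∈ T, weight n q m
        ≤ ∑ m ∈ rowFrom n i j, weight n q m :=
          sum_weight_mono hq₀ hq₁ (subset_rowFrom_of_disjoint_takenBefore hj hT hdisj)
      _ = q ^ (i : ℕ) := sum_rowFrom i.isLt.le j
      _ ≤ α * (n * (1 - q)) * q ^ (i : ℕ) := le_mul_of_one_le_left hqi hcol
      _ = α * n * (1 - q) * q ^ (i : ℕ) := by ring
  · rcases lt_or_ge k i with hki | hik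
    · rw [eq_empty_of_subset_column_of_disjoint_takenBefore hki hT hdisj, sum_empty]
      exact mul_nonneg (mul_nonneg (by positivity) (sub_nonneg.2 hq₁)) hqi
    · calc ∑ m ∈ T, weight n q m
          ≤ ∑ m ∈ column n k, weight n q m := sum_weight_mono hq₀ hq₁ hT
        _ = n * (1 - q) * q ^ k := by rw [sum_column hk, mul_assoc]
        _ ≤ n * (1 - q) * q ^ (i : ℕ) :=
            mul_le_mul_of_nonneg_left (pow_le_pow_of_le_one hq₀ hq₁ hik) hcol₀
        _ ≤ α * n * (1 - q) * q ^ (i : ℕ) := by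
            rw [mul_assoc α, mul_assoc α]
            exact le_mul_of_one_le_left (mul_nonneg hcol₀ hqi) hα

end SetPackingGrid

open SetPackingGrid

lemma tendsto_inv_one_sub_one_sub_div_pow {x : ℝ} (hx : x ≠ 0) :
    Tendsto (fun n : ℕ => (1 - (1 - x / n) ^ n)⁻¹) atTop
      (𝓝 (Real.exp x / (Real.exp x - 1))) := by
  have hlim : Real.exp x / (Real.exp x - 1) = (1 - Real.exp (-x))⁻¹ := by
    have : Real.exp x - 1 ≠ 0 := sub_ne_zero.2 (mt (Real.exp_eq_one_iff _).1 hx)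
    rw [Real.exp_neg]
    field_simp
  have hne : 1 - Real.exp (-x) ≠ 0 :=
    sub_ne_zero.2 (Ne.symm (mt (Real.exp_eq_one_iff _).1 (neg_ne_zero.2 hx)))
  rw [hlim]
  refine (tendsto_const_nhds.sub (Real.tendsto_one_add_div_pow_exp (-x))).inv₀ hne |>.congr ?_
  intro n
  rw [neg_div, ← sub_eq_add_neg]

/-- For every real `α ≥ 1` and every `ε > 0` there exist an integer
`n ≥ 1`, a symmetric set packing game with `n` players (a single common downward-closed
collection `𝒮` for all players), a feasible profile `O`, and a feasible profile `S`
with `w(S) > 0` satisfying the sequential `α`-greedy condition with respect to the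
player order `1,…,n`, such that `w(O)/w(S) ≥ e^{1/α}/(e^{1/α}−1) − ε`; hence the
sequential price of anarchy of symmetric set packing games under `α`-approximate
subgame perfect equilibria is at least `e^{1/α}/(e^{1/α}−1)`. -/
theorem symmetric_set_packing_seq_poa_lower_bound
    (α : ℝ) (hα : 1 ≤ α) (ε : ℝ) (hε : 0 < ε) :
    ∃ (n : ℕ), 1 ≤ n ∧
    ∃ (J : Finset ℕ) (w : ℕ → ℝ) (𝒮 : Set (Finset ℕ))
      (O S : Fin n → Finset ℕ),
      (∀ j ∈ J, 0 ≤ w j) ∧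
      (∀ A ∈ 𝒮, A ⊆ J) ∧
      (∀ A ∈ 𝒮, ∀ T, T ⊆ A → T ∈ 𝒮) ∧
      (∅ ∈ 𝒮) ∧
      -- O is a feasible profile (all players share the collection 𝒮)
      (∀ i, O i ∈ 𝒮) ∧
      (∀ i k, i ≠ k → Disjoint (O i) (O k)) ∧
      -- S is a feasible profile
      (∀ i, S i ∈ 𝒮) ∧
      (∀ i k, i ≠ k → Disjoint (S i) (S k)) ∧
      -- S satisfies the sequential α-greedy condition w.r.t. the order 1,…,n
      (∀ i, ∀ T ∈ 𝒮, T ⊆ J \ ((Finset.univ.filter (fun j => j < i)).biUnion S) →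
        ∑ j ∈ T, w j ≤ α * ∑ j ∈ S i, w j) ∧
      -- positive value and ratio at least e^{1/α}/(e^{1/α}−1) − ε
      0 < ∑ i, ∑ j ∈ S i, w j ∧
      (∑ i, ∑ j ∈ O i, w j) / (∑ i, ∑ j ∈ S i, w j)
        ≥ Real.exp (1 / α) / (Real.exp (1 / α) - 1) - ε := by
  have hα₀ : 0 < α := one_pos.trans_le hα
  obtain ⟨n, hratio, hn⟩ :=
    ((tendsto_inv_one_sub_one_sub_div_pow (one_div_pos.2 hα₀).ne').eventually
      (eventually_gt_nhds (sub_lt_self _ hε))).and (eventually_ge_atTop 1) |>.exists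
  have hn₀ : (0 : ℝ) < n := by exact_mod_cast hn
  set q : ℝ := 1 - 1 / α / n
  have hcol : α * (n * (1 - q)) = 1 := by simp only [q]; field_simp; ring
  have hq₁ : q < 1 := sub_lt_self 1 (by positivity)
  have hq₀ : 0 ≤ q := sub_nonneg.2 <| (div_le_one hn₀).2 <|
    ((div_le_one hα₀).2 hα).trans (by exact_mod_cast hn)
  have hqn : q ^ n < 1 := pow_lt_one₀ hq₀ hq₁ (by omega)
  refine ⟨n, hn, ground n, weight n q, admissible n, fun j => rowFrom n 0 j,
    fun k => column n k, fun m _ => weight_nonneg hq₀ hq₁.le m,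
    fun _ => subset_ground_of_mem_admissible, fun _ hU _ => mem_admissible_of_subset hU,
    Or.inl ⟨0, hn, empty_subset _⟩, fun j => Or.inl ⟨j, j.isLt, subset_rfl⟩,
    fun j j' h => disjoint_rowFrom (Fin.val_ne_of_ne h),
    fun k => Or.inr ⟨k, k.isLt, subset_rfl⟩, fun k k' h => disjoint_column (Fin.val_ne_of_ne h),
    fun i T hT hsub =>
      sum_le_mul_sum_column hα hq₀ hq₁.le hcol.ge i hT (subset_sdiff.1 hsub).2,
    ?_, ?_⟩
  · rw [sum_columns]
    exact mul_pos hn₀ (sub_pos.2 hqn)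
  · rw [sum_rows, sum_columns, div_mul_cancel_left₀ hn₀.ne']
    exact hratio.le
end

section
/- Consider a symmetric set packing game with multiplicities x_1,…,x_n ≥ 1 and x = Σ_i x_i, a real α ≥ 1, and a feasible profile S = (S_1,…,S_n). Fix a player i and let W = J \ (S_1 ∪ … ∪ S_{i−1}). If α·w(S_i) ≥ w(T) for every T ⊆ W that is a union of x_i pairwise disjoint members of 𝒮, then w(S_i) ≥ (x_i/(x·α))·OPT(W). -/
/-!
An optimal packing of `W` by `x` disjoint members of `𝒮` contains a subpacking by `x_i` of them
(its `x_i` heaviest members) that carries at least an `x_i / x` fraction of its weight. That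
subpacking is a strategy available to player `i` inside `W`, so the greedy hypothesis bounds its
weight by `α·w(S_i)`.
-/

/-- `IsUnionOf 𝒮 m T` says that `T` is a union of `m` pairwise disjoint members
of the collection `𝒮`. -/
def IsUnionOf {ι : Type} [DecidableEq ι] (𝒮 : Set (Finset ι)) (m : ℕ)
    (T : Finset ι) : Prop :=
  ∃ f : Fin m → Finset ι, (∀ a, f a ∈ 𝒮) ∧
    (∀ a b, a ≠ b → Disjoint (f a) (f b)) ∧ T = Finset.univ.biUnion f

open Finset

variable {R : Type*} [CommRing R] [LinearOrder R] [IsStrictOrderedRing R]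

theorem Finset.exists_subset_card_eq_mul_sum_le {α : Type*} [DecidableEq α] (u : Finset α)
    (v : α → R) {k : ℕ} (hk : k ≤ #u) :
    ∃ s ⊆ u, #s = k ∧ (k : R) * ∑ a ∈ u, v a ≤ #u * ∑ a ∈ s, v a := by
  obtain ⟨s, hs, hmax⟩ := exists_max_image (powersetCard k u) (fun s => ∑ a ∈ s, v a)
    (powersetCard_nonempty.2 hk)
  obtain ⟨hsu, hcard⟩ := mem_powersetCard.1 hs
  refine ⟨s, hsu, hcard, ?_⟩
  have exchange : ∀ a ∈ s, ∀ b ∈ u \ s, v b ≤ v a := by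
    intro a ha b hb
    obtain ⟨hbu, hbs⟩ := mem_sdiff.1 hb
    have hbs' : b ∉ s.erase a := fun h => hbs (mem_of_mem_erase h)
    have hle := hmax (insert b (s.erase a)) <| mem_powersetCard.2
      ⟨insert_subset hbu ((erase_subset a s).trans hsu), by
        rw [card_insert_of_notMem hbs', card_erase_add_one ha, hcard]⟩
    rw [sum_insert hbs', sum_erase_eq_sub ha] at hle
    linarith
  have hrest : (k : R) * ∑ b ∈ u \ s, v b ≤ #(u \ s) * ∑ a ∈ s, v a :=
    calc (k : R) * ∑ b ∈ u \ s, v b = ∑ _a ∈ s, ∑ b ∈ u \ s, v b := by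
          rw [sum_const, hcard, nsmul_eq_mul]
      _ ≤ ∑ a ∈ s, ∑ _b ∈ u \ s, v a := sum_le_sum fun a ha => sum_le_sum (exchange a ha)
      _ = #(u \ s) * ∑ a ∈ s, v a := by simp only [sum_const, nsmul_eq_mul, mul_sum]
  have hcard_sdiff : (#(u \ s) : R) + k = #u := by
    rw [← hcard]; exact_mod_cast card_sdiff_add_card_eq_card hsu
  rw [← sum_sdiff hsu, ← hcard_sdiff]
  linear_combination hrest

section

variable {ι : Type} [DecidableEq ι] {𝒮 : Set (Finset ι)}

theorem isUnionOf_biUnion_of_card_eq {m k : ℕ} {f : Fin m → Finset ι} (hf : ∀ a, f a ∈ 𝒮)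
    (hdisj : ∀ a b, a ≠ b → Disjoint (f a) (f b)) {s : Finset (Fin m)} (hs : #s = k) :
    IsUnionOf 𝒮 k (s.biUnion f) :=
  ⟨fun a => f (s.orderEmbOfFin hs a), fun _ => hf _,
    fun _ _ hab => hdisj _ _ ((s.orderEmbOfFin hs).injective.ne hab),
    by conv_lhs => rw [← image_orderEmbOfFin_univ s hs, image_biUnion]⟩

theorem IsUnionOf.exists_subset_mul_sum_le {m k : ℕ} {T : Finset ι} (hT : IsUnionOf 𝒮 m T)
    (w : ι → R) (hk : k ≤ m) :
    ∃ T' ⊆ T, IsUnionOf 𝒮 k T' ∧ (k : R) * ∑ j ∈ T, w j ≤ m * ∑ j ∈ T', w j := by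
  obtain ⟨f, hf, hdisj, rfl⟩ := hT
  have hpw : ∀ t : Finset (Fin m), (t : Set (Fin m)).PairwiseDisjoint f :=
    fun _ a _ b _ hab => hdisj a b hab
  obtain ⟨s, -, hs, hle⟩ :=
    univ.exists_subset_card_eq_mul_sum_le (fun a => ∑ j ∈ f a, w j) (k := k) (by simpa using hk)
  refine ⟨s.biUnion f, biUnion_subset_biUnion_of_subset_left f (subset_univ s),
    isUnionOf_biUnion_of_card_eq hf hdisj hs, ?_⟩
  rw [sum_biUnion (hpw _), sum_biUnion (hpw _)]
  simpa using hle

end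

theorem symmetric_set_packing_greedy_player_bound_general
    {ι : Type} [DecidableEq ι] (w : ι → ℝ)
    (n : ℕ)
    (𝒮 : Set (Finset ι))
    (x : Fin n → ℕ) (hx : ∀ i, 1 ≤ x i)
    (α : ℝ) (hα : 1 ≤ α)
    (S : Fin n → Finset ι)
    (i : Fin n)
    (W : Finset ι)
    (OPTW : ℝ)
    (hOPT : IsGreatest
      {v : ℝ | ∃ T, T ⊆ W ∧ IsUnionOf 𝒮 (∑ k, x k) T ∧ v = ∑ j ∈ T, w j} OPTW)
    (hgreedy : ∀ T, T ⊆ W → IsUnionOf 𝒮 (x i) T →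
      ∑ j ∈ T, w j ≤ α * ∑ j ∈ S i, w j) :
    ((x i : ℝ) / ((∑ k, x k : ℕ) * α)) * OPTW ≤ ∑ j ∈ S i, w j := by
  obtain ⟨⟨T, hTW, hT, rfl⟩, -⟩ := hOPT
  have hxi : x i ≤ ∑ k, x k := single_le_sum (fun k _ => Nat.zero_le (x k)) (mem_univ i)
  obtain ⟨T', hT'T, hT', hle⟩ := hT.exists_subset_mul_sum_le w hxi
  have hX : (0 : ℝ) < (∑ k, x k : ℕ) := by exact_mod_cast (hx i).trans hxi
  rw [div_mul_eq_mul_div, div_le_iff₀ (by positivity)]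
  calc (x i : ℝ) * ∑ j ∈ T, w j ≤ (∑ k, x k : ℕ) * ∑ j ∈ T', w j := hle
    _ ≤ (∑ k, x k : ℕ) * (α * ∑ j ∈ S i, w j) :=
        mul_le_mul_of_nonneg_left (hgreedy T' (hT'T.trans hTW) hT') hX.le
    _ = (∑ j ∈ S i, w j) * ((∑ k, x k : ℕ) * α) := by ring

/-- In a symmetric set packing game with multiplicities
`x_1,…,x_n ≥ 1` and `x = Σ_i x_i`, for a real `α ≥ 1` and a feasible profile
`S = (S_1,…,S_n)`: fix a player `i` and let `W = J \ (S_1 ∪ … ∪ S_{i−1})`. If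
`α·w(S_i) ≥ w(T)` for every `T ⊆ W` that is a union of `x_i` pairwise disjoint
members of `𝒮`, then `w(S_i) ≥ (x_i/(x·α))·OPT(W)`, where `OPT(W)` is the maximum of
`w(T)` over all `T ⊆ W` that are unions of `x` pairwise disjoint members of `𝒮`. -/
theorem symmetric_set_packing_greedy_player_bound
    {ι : Type} [DecidableEq ι] (J : Finset ι) (w : ι → ℝ)
    (hw : ∀ j ∈ J, 0 ≤ w j) (n : ℕ)
    (𝒮 : Set (Finset ι))
    (hJ : ∀ A ∈ 𝒮, A ⊆ J)
    (hdc : ∀ A ∈ 𝒮, ∀ T, T ⊆ A → T ∈ 𝒮)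
    (hempty : ∅ ∈ 𝒮)
    (x : Fin n → ℕ) (hx : ∀ i, 1 ≤ x i)
    (α : ℝ) (hα : 1 ≤ α)
    (S : Fin n → Finset ι)
    (hS : ∀ i, IsUnionOf 𝒮 (x i) (S i))
    (hSdisj : ∀ i k, i ≠ k → Disjoint (S i) (S k))
    (i : Fin n)
    (W : Finset ι)
    (hW : W = J \ ((Finset.univ.filter (fun j => j < i)).biUnion S))
    (OPTW : ℝ)
    (hOPT : IsGreatest
      {v : ℝ | ∃ T, T ⊆ W ∧ IsUnionOf 𝒮 (∑ k, x k) T ∧ v = ∑ j ∈ T, w j} OPTW)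
    (hgreedy : ∀ T, T ⊆ W → IsUnionOf 𝒮 (x i) T →
      ∑ j ∈ T, w j ≤ α * ∑ j ∈ S i, w j) :
    ((x i : ℝ) / ((∑ k, x k : ℕ) * α)) * OPTW ≤ ∑ j ∈ S i, w j :=
  symmetric_set_packing_greedy_player_bound_general w n 𝒮 x hx α hα S i W OPTW hOPT hgreedy
end

section
/- For every real γ ≥ 1 and all integers a ≥ 0 and b ≥ 1 satisfying b/γ ≥ 1 − ((γ−1)/γ)^b (which holds automatically by the companion inequality), it holds that b/γ + ((γ−b)/γ)·(γ^a − (γ−1)^a)/γ^a ≥ (γ^{a+b} − (γ−1)^{a+b})/γ^{a+b}. -/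
/-! Writing `q = (γ - 1)/γ ∈ [0, 1)`, each quotient `(γ^k - (γ-1)^k)/γ^k` is `1 - q^k`, and the
right-hand side is `1 - (1 - b/γ) q^a`; so the claim is the hypothesis `1 - q^b ≤ b/γ`
multiplied by `q^a ≥ 0`. -/

theorem pow_sub_pow_div_pow_eq {K : Type*} [Field K] {x : K} (y : K) (hx : x ≠ 0)
    (n : ℕ) : (x ^ n - y ^ n) / x ^ n = 1 - (y / x) ^ n := by
  rw [sub_div, div_self (pow_ne_zero n hx), div_pow]

theorem one_sub_mul_le_add_one_sub_mul {K : Type*} [CommRing K] [LinearOrder K]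
    [IsStrictOrderedRing K] {p r c : K} (hp : 0 ≤ p) (h : 1 - r ≤ c) : 1 - p * r ≤ c + (1 - c) * (1 - p) := by
  linarith [mul_le_mul_of_nonneg_left h hp]

theorem induction_step_inequality_general (γ : ℝ) (hγ : 1 ≤ γ) (a b : ℕ)
    (h : 1 - ((γ - 1) / γ) ^ b ≤ (b : ℝ) / γ) :
    (γ ^ (a + b) - (γ - 1) ^ (a + b)) / γ ^ (a + b) ≤
      (b : ℝ) / γ + ((γ - b) / γ) * ((γ ^ a - (γ - 1) ^ a) / γ ^ a) := by
  have hγ0 : γ ≠ 0 := (zero_lt_one.trans_le hγ).ne'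
  have hq : 0 ≤ ((γ - 1) / γ) ^ a := by
    have : 0 ≤ γ - 1 := sub_nonneg.2 hγ
    positivity
  have hcoeff : (γ - b) / γ = 1 - b / γ := by rw [sub_div, div_self hγ0]
  rw [pow_sub_pow_div_pow_eq _ hγ0, pow_sub_pow_div_pow_eq _ hγ0, pow_add, hcoeff]
  exact one_sub_mul_le_add_one_sub_mul hq h

/-- For every real `γ ≥ 1` and all integers `a ≥ 0` and `b ≥ 1`
satisfying `b/γ ≥ 1 − ((γ−1)/γ)^b` (which holds automatically by the companion
inequality), it holds that
`b/γ + ((γ−b)/γ)·(γ^a − (γ−1)^a)/γ^a ≥ (γ^{a+b} − (γ−1)^{a+b})/γ^{a+b}`. -/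
theorem induction_step_inequality (γ : ℝ) (hγ : 1 ≤ γ) (a b : ℕ) (hb : 1 ≤ b)
    (h : 1 - ((γ - 1) / γ) ^ b ≤ (b : ℝ) / γ) :
    (γ ^ (a + b) - (γ - 1) ^ (a + b)) / γ ^ (a + b) ≤
      (b : ℝ) / γ + ((γ - b) / γ) * ((γ ^ a - (γ - 1) ^ a) / γ ^ a) :=
  induction_step_inequality_general γ hγ a b h
end

section
/- Consider a symmetric set packing game with multiplicities x_1,…,x_n ≥ 1, x = Σ_i x_i, a real α ≥ 1, and set γ = x·α. Let S = (S_1,…,S_n) be a feasible profile such that for every player i and every T ⊆ J \ (S_1 ∪ … ∪ S_{i−1}) that is a union of x_i pairwise disjoint members of 𝒮, α·w(S_i) ≥ w(T). Then for every i = 1,…,n, writing x'_i = x_1 + … + x_i, one has Σ_{j=1}^{i} w(S_j) ≥ ((γ^{x'_i} − (γ−1)^{x'_i})/γ^{x'_i})·OPT(J); in particular w(S) = Σ_{j=1}^{n} w(S_j) ≥ ((γ^x − (γ−1)^x)/γ^x)·OPT(J). -/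
/-!
Write `D_i` for `OPT` minus the weight of `S_1, …, S_i`. The optimum is a union of
`X = Σ x_k` disjoint members of `𝒮`; deleting the earlier players' sets from each keeps them
disjoint members of `𝒮`, and the heaviest `x_i` of them carry at least an `x_i / X` share of
what is left, which is at least `D_{i-1}`. Greediness then gives `γ · w(S_i) ≥ x_i · D_{i-1}`,
so `D_i ≤ (1 - x_i / γ) D_{i-1} ≤ ((γ - 1) / γ) ^ x_i · D_{i-1}` by Bernoulli's inequality, and
`D_i ≤ ((γ - 1) / γ) ^ (x'_i) · OPT` follows by induction.
-/

open Finset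

theorem Finset.exists_subset_card_eq_forall_le {κ α : Type*} [DecidableEq κ] [LinearOrder α]
    (v : κ → α) {s : Finset κ} {m : ℕ} (hm : m ≤ #s) :
    ∃ B ⊆ s, #B = m ∧ ∀ a ∈ B, ∀ b ∈ s \ B, v b ≤ v a := by
  induction m with
  | zero => exact ⟨∅, empty_subset s, rfl, by simp⟩
  | succ m ih =>
    obtain ⟨B, hBs, rfl, hB⟩ := ih (Nat.le_of_succ_le hm)
    have hrest : (s \ B).Nonempty := by
      rw [sdiff_nonempty]
      intro h
      have := card_le_card h
      omega
    obtain ⟨b, hb, hbmax⟩ := exists_max_image (s \ B) v hrest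
    rw [mem_sdiff] at hb
    refine ⟨insert b B, insert_subset hb.1 hBs, card_insert_of_notMem hb.2, ?_⟩
    intro a ha c hc
    have hc' : c ∈ s \ B := by grind
    rcases mem_insert.1 ha with rfl | haB
    · exact hbmax c hc'
    · exact hB a haB c hc'

theorem Finset.exists_subset_card_eq_sum_mul_le {κ α : Type*} [DecidableEq κ] [Semiring α]
    [LinearOrder α] [IsStrictOrderedRing α] [ExistsAddOfLE α]
    (v : κ → α) {s : Finset κ} {m : ℕ} (hm : m ≤ #s) :
    ∃ B ⊆ s, #B = m ∧ (∑ a ∈ s, v a) * m ≤ #s * ∑ a ∈ B, v a := by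
  obtain ⟨B, hBs, rfl, htop⟩ := exists_subset_card_eq_forall_le v hm
  refine ⟨B, hBs, rfl, ?_⟩
  have hmono : MonovaryOn v (fun a => if a ∈ B then (1 : α) else 0) s := by
    intro a ha b _ hab
    have hB : a ∉ B ∧ b ∈ B := by
      dsimp only at hab
      split_ifs at hab <;> simp_all [zero_le_one.not_gt]
    exact htop b hB.2 a (mem_sdiff.2 ⟨ha, hB.1⟩)
  simpa [inter_eq_right.2 hBs] using hmono.sum_mul_sum_le_card_mul_sum

theorem Finset.sum_sub_sum_le_sum_sdiff {κ M : Type*} [DecidableEq κ] [AddCommGroup M]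
    [PartialOrder M] [IsOrderedAddMonoid M] {s t : Finset κ} {w : κ → M}
    (hw : ∀ j ∈ t, 0 ≤ w j) : ∑ j ∈ s, w j - ∑ j ∈ t, w j ≤ ∑ j ∈ s \ t, w j := by
  rw [sub_le_iff_le_add, ← sum_inter_add_sum_sdiff s t, add_comm]
  exact add_le_add le_rfl (sum_le_sum_of_subset_of_nonneg inter_subset_right fun j hj _ => hw j hj)

namespace IsUnionOf

variable {ι : Type} [DecidableEq ι] {𝒮 : Set (Finset ι)} {m X : ℕ} {T : Finset ι}

theorem subset {J : Finset ι} (hT : IsUnionOf 𝒮 m T) (hJ : ∀ A ∈ 𝒮, A ⊆ J) : T ⊆ J := by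
  obtain ⟨f, hf, -, rfl⟩ := hT
  exact biUnion_subset.2 fun a _ => hJ _ (hf a)

theorem biUnion {κ : Type*} (B : Finset κ) {f : κ → Finset ι} (hf : ∀ a ∈ B, f a ∈ 𝒮)
    (hd : (B : Set κ).PairwiseDisjoint f) : IsUnionOf 𝒮 #B (B.biUnion f) := by
  refine ⟨fun k => f (B.equivFin.symm k), fun k => hf _ (B.equivFin.symm k).2,
    fun k l hkl => hd (B.equivFin.symm k).2 (B.equivFin.symm l).2 ?_, ?_⟩
  · exact fun h => hkl (B.equivFin.symm.injective (Subtype.ext h))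
  · ext j
    simp only [mem_biUnion, mem_univ, true_and]
    exact ⟨fun ⟨a, ha, hj⟩ => ⟨B.equivFin ⟨a, ha⟩, by simpa using hj⟩,
      fun ⟨k, hj⟩ => ⟨_, (B.equivFin.symm k).2, hj⟩⟩

theorem exists_subset_sdiff (hdc : ∀ A ∈ 𝒮, ∀ T, T ⊆ A → T ∈ 𝒮) (hT : IsUnionOf 𝒮 X T)
    (hm : m ≤ X) (U : Finset ι) (w : ι → ℝ) :
    ∃ T' ⊆ T \ U, IsUnionOf 𝒮 m T' ∧ m * ∑ t ∈ T \ U, w t ≤ X * ∑ t ∈ T', w t := by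
  obtain ⟨f, hf, hfd, rfl⟩ := hT
  -- `T'` is the union of the `m` heaviest pieces `f a \ U`.
  have hd : ((univ : Finset (Fin X)) : Set (Fin X)).PairwiseDisjoint (fun a => f a \ U) :=
    fun a _ b _ hab => (hfd a b hab).mono sdiff_subset sdiff_subset
  have hsdiff : univ.biUnion f \ U = univ.biUnion (fun a => f a \ U) := by
    ext; simp only [mem_sdiff, mem_biUnion, mem_univ, true_and]; tauto
  obtain ⟨B, -, rfl, hB⟩ := exists_subset_card_eq_sum_mul_le (fun a => ∑ t ∈ f a \ U, w t)
    (s := univ) (by simpa using hm)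
  refine ⟨B.biUnion fun a => f a \ U, ?_, ?_, ?_⟩
  · rw [hsdiff]; exact biUnion_subset_biUnion_of_subset_left _ (subset_univ B)
  · exact IsUnionOf.biUnion B (fun a _ => hdc _ (hf a) _ sdiff_subset) (hd.subset (subset_univ B))
  · rw [hsdiff, sum_biUnion hd, sum_biUnion (hd.subset (subset_univ B)), mul_comm]
    simpa using hB

theorem mul_sub_le_of_greedy {J U S : Finset ι} {w : ι → ℝ} {α P : ℝ}
    (hdc : ∀ A ∈ 𝒮, ∀ T, T ⊆ A → T ∈ 𝒮) (hT : IsUnionOf 𝒮 X T) (hTJ : T ⊆ J) (hm : m ≤ X)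
    (hUw : ∀ j ∈ U, 0 ≤ w j) (hUP : ∑ t ∈ U, w t ≤ P)
    (hgreedy : ∀ T', T' ⊆ J \ U → IsUnionOf 𝒮 m T' → ∑ t ∈ T', w t ≤ α * ∑ t ∈ S, w t) :
    m * (∑ t ∈ T, w t - P) ≤ X * (α * ∑ t ∈ S, w t) := by
  obtain ⟨T', hT'U, hT', hT'w⟩ := hT.exists_subset_sdiff hdc hm U w
  calc m * (∑ t ∈ T, w t - P) ≤ m * ∑ t ∈ T \ U, w t := by
        gcongr; linarith [sum_sub_sum_le_sum_sdiff (s := T) hUw]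
    _ ≤ X * ∑ t ∈ T', w t := hT'w
    _ ≤ X * (α * ∑ t ∈ S, w t) := by
        gcongr; exact hgreedy T' (hT'U.trans (sdiff_subset_sdiff hTJ subset_rfl)) hT'

end IsUnionOf

theorem sub_add_le_pow_add_mul {γ O P a : ℝ} {k M : ℕ} (hγ : 1 ≤ γ) (hO : 0 ≤ O) (ha : 0 ≤ a)
    (hstep : k * (O - P) ≤ γ * a) (hP : O - P ≤ ((γ - 1) / γ) ^ M * O) :
    O - (a + P) ≤ ((γ - 1) / γ) ^ (k + M) * O := by
  set c := (γ - 1) / γ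
  have hγ0 : 0 < γ := by linarith
  have hc : 0 ≤ c := div_nonneg (by linarith) hγ0.le
  rcases le_or_gt (O - P) 0 with hD | hD
  · linarith [mul_nonneg (pow_nonneg hc (k + M)) hO]
  have hBernoulli : 1 - k / γ ≤ c ^ k := by
    have hc1 : c - 1 = -1 / γ := by rw [div_sub_one hγ0.ne']; ring
    calc 1 - k / γ = 1 + k * (c - 1) := by rw [hc1]; ring
      _ ≤ c ^ k := one_add_mul_sub_le_pow (by linarith) k
  have hshare : (O - P) * (k / γ) ≤ a := by
    rw [mul_div_assoc', div_le_iff₀ hγ0]; linarith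
  calc O - (a + P) ≤ (O - P) * (1 - k / γ) := by linarith
    _ ≤ (O - P) * c ^ k := by gcongr
    _ ≤ c ^ M * O * c ^ k := by gcongr
    _ = c ^ (k + M) * O := by ring

theorem sub_sum_le_pow_mul {n : ℕ} {γ O : ℝ} (hγ : 1 ≤ γ) (hO : 0 ≤ O) {a : Fin n → ℝ}
    (k : Fin n → ℕ) (ha : ∀ i, 0 ≤ a i)
    (hstep : ∀ i, k i * (O - ∑ j ∈ univ.filter (fun j => j < i), a j) ≤ γ * a i) :
    ∀ m ≤ n, O - ∑ j ∈ univ.filter (fun j : Fin n => (j : ℕ) < m), a j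
      ≤ ((γ - 1) / γ) ^ (∑ j ∈ univ.filter (fun j : Fin n => (j : ℕ) < m), k j) * O
  | 0, _ => by simp
  | m + 1, hm => by
    set i : Fin n := ⟨m, hm⟩
    have hlt : univ.filter (fun j => j < i) = univ.filter (fun j : Fin n => (j : ℕ) < m) := by
      ext; simp [i, Fin.lt_def]
    have hinsert : univ.filter (fun j : Fin n => (j : ℕ) < m + 1)
        = insert i (univ.filter (fun j => j < i)) := by
      ext j
      simp only [mem_filter, mem_univ, true_and, mem_insert, i, Fin.ext_iff, Fin.lt_def]
      omega
    rw [hinsert, sum_insert (by simp), sum_insert (by simp), hlt]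
    exact sub_add_le_pow_add_mul hγ hO (ha i) (hlt ▸ hstep i)
      (sub_sum_le_pow_mul hγ hO k ha hstep m (by omega))

theorem sub_pow_div_pow_mul_le {γ O P : ℝ} {M : ℕ} (hγ : γ ≠ 0)
    (h : O - P ≤ ((γ - 1) / γ) ^ M * O) : (γ ^ M - (γ - 1) ^ M) / γ ^ M * O ≤ P := by
  rw [sub_div, div_self (pow_ne_zero M hγ), ← div_pow]
  linarith

theorem symmetric_set_packing_greedy_cumulative_bound_general
    {ι : Type} [DecidableEq ι] (J : Finset ι) (w : ι → ℝ)
    (hw : ∀ j ∈ J, 0 ≤ w j) (n : ℕ)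
    (𝒮 : Set (Finset ι))
    (hJ : ∀ A ∈ 𝒮, A ⊆ J)
    (hdc : ∀ A ∈ 𝒮, ∀ T, T ⊆ A → T ∈ 𝒮)
    (x : Fin n → ℕ)
    (α : ℝ) (hα : 1 ≤ α)
    (γ : ℝ) (hγ : γ = (∑ k, x k : ℕ) * α)
    (S : Fin n → Finset ι)
    (hS : ∀ i, IsUnionOf 𝒮 (x i) (S i))
    (hSdisj : ∀ i k, i ≠ k → Disjoint (S i) (S k))
    (OPTJ : ℝ)
    (hOPT : IsGreatest
      {v : ℝ | ∃ T, T ⊆ J ∧ IsUnionOf 𝒮 (∑ k, x k) T ∧ v = ∑ j ∈ T, w j} OPTJ)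
    (hgreedy : ∀ i, ∀ T, T ⊆ J \ ((Finset.univ.filter (fun j => j < i)).biUnion S) →
      IsUnionOf 𝒮 (x i) T → ∑ j ∈ T, w j ≤ α * ∑ j ∈ S i, w j) :
    (∀ i : Fin n,
      ((γ ^ (∑ j ∈ Finset.univ.filter (fun j => j ≤ i), x j)
          - (γ - 1) ^ (∑ j ∈ Finset.univ.filter (fun j => j ≤ i), x j))
        / γ ^ (∑ j ∈ Finset.univ.filter (fun j => j ≤ i), x j)) * OPTJ
        ≤ ∑ j ∈ Finset.univ.filter (fun j => j ≤ i), ∑ t ∈ S j, w t) ∧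
    ((γ ^ (∑ k, x k) - (γ - 1) ^ (∑ k, x k)) / γ ^ (∑ k, x k)) * OPTJ
      ≤ ∑ i, ∑ t ∈ S i, w t := by
  obtain ⟨T, hTJ, hT, hOPTJ⟩ := hOPT.1
  have hSJ : ∀ i, S i ⊆ J := fun i => (hS i).subset hJ
  have hwS : ∀ i, 0 ≤ ∑ t ∈ S i, w t := fun i => sum_nonneg fun t ht => hw t (hSJ i ht)
  rcases Nat.eq_zero_or_pos (∑ k, x k) with hX | hX
  · have hx0 : ∀ s : Finset (Fin n), ∑ j ∈ s, x j = 0 :=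
      fun s => sum_eq_zero fun j _ => sum_eq_zero_iff.1 hX j (mem_univ j)
    simp only [hx0, pow_zero, sub_self, zero_div, zero_mul]
    exact ⟨fun i => sum_nonneg fun j _ => hwS j, sum_nonneg fun j _ => hwS j⟩
  have hγ1 : 1 ≤ γ := hγ ▸ one_le_mul_of_one_le_of_one_le (by exact_mod_cast hX) hα
  have hO : 0 ≤ OPTJ := hOPTJ ▸ sum_nonneg fun t ht => hw t (hTJ ht)
  have hstep : ∀ i, x i * (OPTJ - ∑ j ∈ univ.filter (fun j => j < i), ∑ t ∈ S j, w t)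
      ≤ γ * ∑ t ∈ S i, w t := fun i => by
    rw [hOPTJ, hγ, mul_assoc]
    exact hT.mul_sub_le_of_greedy hdc hTJ
      (single_le_sum (fun _ _ => Nat.zero_le _) (mem_univ i))
      (fun j hj => hw j (biUnion_subset.2 (fun j _ => hSJ j) hj))
      (sum_biUnion fun a _ b _ hab => hSdisj a b hab).le (hgreedy i)
  have hbound := sub_sum_le_pow_mul hγ1 hO x hwS hstep
  refine ⟨fun i => ?_, ?_⟩
  · have hle : univ.filter (fun j => j ≤ i)
        = univ.filter (fun j : Fin n => (j : ℕ) < (i : ℕ) + 1) := by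
      ext j; simp only [mem_filter, mem_univ, true_and, Fin.le_def]; omega
    rw [hle]
    exact sub_pow_div_pow_mul_le (zero_lt_one.trans_le hγ1).ne' (hbound (i + 1) i.isLt)
  · simpa using sub_pow_div_pow_mul_le (zero_lt_one.trans_le hγ1).ne' (hbound n le_rfl)

/-- In a symmetric set packing game with multiplicities
`x_1,…,x_n ≥ 1`, `x = Σ_i x_i`, a real `α ≥ 1` and `γ = x·α`: if the feasible profile
`S = (S_1,…,S_n)` satisfies the sequential `α`-greedy condition (for every player `i`
and every `T ⊆ J \ (S_1 ∪ … ∪ S_{i−1})` that is a union of `x_i` pairwise disjoint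
members of `𝒮`, `α·w(S_i) ≥ w(T)`), then for every `i`, writing
`x'_i = x_1 + … + x_i`, one has
`Σ_{j=1}^{i} w(S_j) ≥ ((γ^{x'_i} − (γ−1)^{x'_i})/γ^{x'_i})·OPT(J)`; in particular
`w(S) ≥ ((γ^x − (γ−1)^x)/γ^x)·OPT(J)`. -/
theorem symmetric_set_packing_greedy_cumulative_bound
    {ι : Type} [DecidableEq ι] (J : Finset ι) (w : ι → ℝ)
    (hw : ∀ j ∈ J, 0 ≤ w j) (n : ℕ)
    (𝒮 : Set (Finset ι))
    (hJ : ∀ A ∈ 𝒮, A ⊆ J)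
    (hdc : ∀ A ∈ 𝒮, ∀ T, T ⊆ A → T ∈ 𝒮)
    (hempty : ∅ ∈ 𝒮)
    (x : Fin n → ℕ) (hx : ∀ i, 1 ≤ x i)
    (α : ℝ) (hα : 1 ≤ α)
    (γ : ℝ) (hγ : γ = (∑ k, x k : ℕ) * α)
    (S : Fin n → Finset ι)
    (hS : ∀ i, IsUnionOf 𝒮 (x i) (S i))
    (hSdisj : ∀ i k, i ≠ k → Disjoint (S i) (S k))
    (OPTJ : ℝ)
    (hOPT : IsGreatest
      {v : ℝ | ∃ T, T ⊆ J ∧ IsUnionOf 𝒮 (∑ k, x k) T ∧ v = ∑ j ∈ T, w j} OPTJ)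
    (hgreedy : ∀ i, ∀ T, T ⊆ J \ ((Finset.univ.filter (fun j => j < i)).biUnion S) →
      IsUnionOf 𝒮 (x i) T → ∑ j ∈ T, w j ≤ α * ∑ j ∈ S i, w j) :
    (∀ i : Fin n,
      ((γ ^ (∑ j ∈ Finset.univ.filter (fun j => j ≤ i), x j)
          - (γ - 1) ^ (∑ j ∈ Finset.univ.filter (fun j => j ≤ i), x j))
        / γ ^ (∑ j ∈ Finset.univ.filter (fun j => j ≤ i), x j)) * OPTJ
        ≤ ∑ j ∈ Finset.univ.filter (fun j => j ≤ i), ∑ t ∈ S j, w t) ∧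
    ((γ ^ (∑ k, x k) - (γ - 1) ^ (∑ k, x k)) / γ ^ (∑ k, x k)) * OPTJ
      ≤ ∑ i, ∑ t ∈ S i, w t :=
  symmetric_set_packing_greedy_cumulative_bound_general J w hw n 𝒮 hJ hdc x α hα γ hγ S hS hSdisj
    OPTJ hOPT hgreedy
end

section
/- For every real α ≥ 1, it holds that α + 1/2 ≤ e^{1/α}/(e^{1/α}−1) ≤ α + 1/(e−1). -/
/-!
With `x = 1/α ∈ (0, 1]` both bounds are statements about `f x = eˣ/(eˣ - 1) - 1/x`.
The lower bound `f x ≥ 1/2` amounts to `(x - 2) eˣ + x + 2 ≥ 0`, a function vanishing at `0`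
whose derivative `1 - (1 - x) eˣ` is nonnegative because `1 - x ≤ e⁻ˣ`.
The upper bound holds because `f` is increasing on `(0, ∞)`, so `f x ≤ f 1 = 1/(e - 1)`:
`f' ≥ 0` reads `x² eˣ ≤ (eˣ - 1)²`, i.e. `x ≤ 2 sinh (x/2)`.
-/

open Real Set

namespace Real

lemma exp_sub_one_pos {x : ℝ} (hx : 0 < x) : 0 < exp x - 1 :=
  sub_pos.mpr (one_lt_exp_iff.mpr hx)

lemma monotone_sub_two_mul_exp_add : Monotone (fun x : ℝ => (x - 2) * exp x + x + 2) := by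
  have hderiv (x : ℝ) : HasDerivAt (fun x : ℝ => (x - 2) * exp x + x + 2)
      (1 * exp x + (x - 2) * exp x + 1) x :=
    ((((hasDerivAt_id x).sub_const 2).mul (hasDerivAt_exp x)).add (hasDerivAt_id x)).add_const 2
  refine monotone_of_deriv_nonneg (fun x => (hderiv x).differentiableAt) fun x => ?_
  have h : (1 - x) * exp x ≤ 1 := by
    calc (1 - x) * exp x ≤ exp (-x) * exp x :=
          mul_le_mul_of_nonneg_right (by linarith [add_one_le_exp (-x)]) (exp_pos x).le
      _ = 1 := by rw [← exp_add, neg_add_cancel, exp_zero]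
  rw [(hderiv x).deriv]
  linarith

lemma two_add_mul_exp_sub_one_le {x : ℝ} (hx : 0 ≤ x) :
    (2 + x) * (exp x - 1) ≤ 2 * x * exp x := by
  have h := monotone_sub_two_mul_exp_add hx
  simp only [exp_zero] at h
  linarith

lemma inv_add_half_le_exp_div_exp_sub_one {x : ℝ} (hx : 0 < x) :
    x⁻¹ + 1 / 2 ≤ exp x / (exp x - 1) := by
  have hE := exp_sub_one_pos hx
  rw [le_div_iff₀ hE, show x⁻¹ + 1 / 2 = (2 + x) / (2 * x) by field_simp,
    div_mul_eq_mul_div, div_le_iff₀ (by positivity)]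
  linarith [two_add_mul_exp_sub_one_le hx.le]

lemma mul_exp_half_le_exp_sub_one {x : ℝ} (hx : 0 ≤ x) : x * exp (x / 2) ≤ exp x - 1 := by
  have h : x / 2 ≤ sinh (x / 2) := self_le_sinh_iff.mpr (by positivity)
  rw [sinh_eq] at h
  calc x * exp (x / 2) ≤ (exp (x / 2) - exp (-(x / 2))) * exp (x / 2) :=
        mul_le_mul_of_nonneg_right (by linarith) (exp_pos _).le
    _ = exp x - 1 := by rw [sub_mul, ← exp_add, ← exp_add, add_halves, neg_add_cancel, exp_zero]

lemma sq_mul_exp_le_sq_exp_sub_one {x : ℝ} (hx : 0 ≤ x) : x ^ 2 * exp x ≤ (exp x - 1) ^ 2 := by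
  calc x ^ 2 * exp x = (x * exp (x / 2)) ^ 2 := by rw [mul_pow, ← exp_nat_mul]; ring_nf
    _ ≤ (exp x - 1) ^ 2 :=
        pow_le_pow_left₀ (mul_nonneg hx (exp_pos _).le) (mul_exp_half_le_exp_sub_one hx) 2

lemma monotoneOn_exp_div_exp_sub_one_sub_inv :
    MonotoneOn (fun x : ℝ => exp x / (exp x - 1) - x⁻¹) (Ioi 0) := by
  have hderiv {x : ℝ} (hx : 0 < x) : HasDerivAt (fun x : ℝ => exp x / (exp x - 1) - x⁻¹)
      ((exp x * (exp x - 1) - exp x * exp x) / (exp x - 1) ^ 2 - -(x ^ 2)⁻¹) x :=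
    ((hasDerivAt_exp x).div ((hasDerivAt_exp x).sub_const 1) (exp_sub_one_pos hx).ne').sub
      (hasDerivAt_inv hx.ne')
  refine monotoneOn_of_deriv_nonneg (convex_Ioi 0)
    (fun x hx => (hderiv hx).continuousAt.continuousWithinAt)
    (fun x hx => (hderiv (interior_subset hx)).differentiableAt.differentiableWithinAt)
    fun x hx => ?_
  replace hx : 0 < x := by simpa using hx
  have hE := exp_sub_one_pos hx
  rw [(hderiv hx).deriv, sub_nonneg, show exp x * (exp x - 1) - exp x * exp x = -exp x by ring,
    neg_div, neg_le_neg_iff, div_le_iff₀ (pow_pos hE 2), inv_mul_eq_div,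
    le_div_iff₀ (by positivity), mul_comm]
  exact sq_mul_exp_le_sq_exp_sub_one hx.le

lemma exp_div_exp_sub_one_le_inv_add {x : ℝ} (hx₀ : 0 < x) (hx₁ : x ≤ 1) :
    exp x / (exp x - 1) ≤ x⁻¹ + 1 / (exp 1 - 1) := by
  have h := monotoneOn_exp_div_exp_sub_one_sub_inv hx₀ (mem_Ioi.mpr one_pos) hx₁
  have h₁ : exp 1 / (exp 1 - 1) - 1⁻¹ = 1 / (exp 1 - 1) := by
    field_simp [(exp_sub_one_pos one_pos).ne']
    ring
  simp only [h₁] at h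
  linarith

end Real

/-- For every real `α ≥ 1`,
`α + 1/2 ≤ e^{1/α}/(e^{1/α}−1) ≤ α + 1/(e−1)`. -/
theorem exp_ratio_bounds (α : ℝ) (hα : 1 ≤ α) :
    α + 1 / 2 ≤ Real.exp (1 / α) / (Real.exp (1 / α) - 1) ∧
    Real.exp (1 / α) / (Real.exp (1 / α) - 1) ≤ α + 1 / (Real.exp 1 - 1) := by
  have hx₀ : 0 < 1 / α := by positivity
  have hx₁ : 1 / α ≤ 1 := (div_le_one (by positivity)).mpr hα
  have hinv : (1 / α)⁻¹ = α := by rw [one_div, inv_inv]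
  constructor
  · simpa only [hinv] using inv_add_half_le_exp_div_exp_sub_one hx₀
  · simpa only [hinv] using exp_div_exp_sub_one_le_inv_add hx₀ hx₁
end

section
/- For every set packing game with n ≥ 2 players, every real α ≥ 1, every integer k with 1 ≤ k ≤ n, every α-approximate k-collusion Nash equilibrium S = (S_1,…,S_n), and every feasible profile O = (O_1,…,O_n), the total values satisfy w(O) ≤ (α + (n−k)/(n−1))·w(S). -/
/-!
Fix a coalition `K` of `k` players and let each `i ∈ K` deviate to `O i` minus everything held
by the players outside `K`. This is a feasible joint deviation, so the equilibrium condition gives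
`∑_{i ∈ K} w(O i) ≤ α ∑_{i ∈ K} w(S i) + ∑_{i ∈ K, j ∉ K} w(O i ∩ S j)`.
Summing over all `k`-subsets `K`, every player is counted `C(n-1, k-1)` times and every ordered
pair `i ≠ j` is counted `C(n-2, k-1) = C(n-1, k-1) (n-k)/(n-1)` times in the last sum; finally
`∑_{i ≠ j} w(O i ∩ S j) ≤ w(S)` because the `O i` are disjoint.
-/

open Finset Function

namespace Finset

variable {ι M : Type*} [DecidableEq ι] [AddCommMonoid M]

theorem card_filter_mem_powersetCard {s : Finset ι} {a : ι} (ha : a ∈ s) {k : ℕ} (hk : 1 ≤ k) :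
    #{K ∈ s.powersetCard k | a ∈ K} = (#s - 1).choose (k - 1) := by
  simpa only [singleton_subset_iff, card_singleton] using
    card_filter_powersetCard_subset {a} s k (singleton_subset_iff.2 ha) hk

theorem sum_powersetCard_sum {s : Finset ι} {k : ℕ} (hk : 1 ≤ k) (f : ι → M) :
    ∑ K ∈ s.powersetCard k, ∑ i ∈ K, f i = (#s - 1).choose (k - 1) • ∑ i ∈ s, f i := by
  rw [sum_comm' (t' := s) (s' := fun i => {K ∈ s.powersetCard k | i ∈ K}), smul_sum]
  · refine sum_congr rfl fun i hi => ?_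
    rw [sum_const, card_filter_mem_powersetCard hi hk]
  · intro K i
    simp only [mem_filter, mem_powersetCard]
    exact ⟨fun h => ⟨h, h.1.1 h.2⟩, And.left⟩

theorem sum_powersetCard_sum_sum_sdiff {s : Finset ι} {k : ℕ} (hk : 1 ≤ k) (g : ι → ι → M) :
    ∑ K ∈ s.powersetCard k, ∑ i ∈ K, ∑ j ∈ s \ K, g i j
      = (#s - 2).choose (k - 1) • ∑ j ∈ s, ∑ i ∈ s.erase j, g i j := by
  rw [sum_congr rfl fun K _ => sum_comm,
    sum_comm' (t' := s) (s' := fun j => (s.erase j).powersetCard k), smul_sum]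
  · refine sum_congr rfl fun j hj => ?_
    rw [sum_powersetCard_sum hk, card_erase_of_mem hj, Nat.sub_sub]
  · intro K j
    simp only [mem_sdiff, mem_powersetCard, subset_erase]
    tauto

theorem sum_le_sum_add_of_forall_mem_powersetCard {𝕜 : Type*} [Field 𝕜] [LinearOrder 𝕜]
    [IsStrictOrderedRing 𝕜] {s : Finset ι} {k : ℕ} (hs : 2 ≤ #s) (hk : 1 ≤ k) (hks : k ≤ #s)
    {a b : ι → 𝕜} {g : ι → ι → 𝕜}
    (h : ∀ K ∈ s.powersetCard k, ∑ i ∈ K, a i ≤ ∑ i ∈ K, b i + ∑ i ∈ K, ∑ j ∈ s \ K, g i j) :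
    ∑ i ∈ s, a i
      ≤ ∑ i ∈ s, b i + ((#s : 𝕜) - k) / ((#s : 𝕜) - 1) * ∑ j ∈ s, ∑ i ∈ s.erase j, g i j := by
  have hc₁ : (0 : 𝕜) < (#s - 1).choose (k - 1) := by exact_mod_cast Nat.choose_pos (by omega)
  have hs₁ : (0 : 𝕜) < #s - 1 := by
    rw [sub_pos]
    exact_mod_cast hs
  have hc : ((#s - 2).choose (k - 1) : 𝕜)
      = (#s - 1).choose (k - 1) * (((#s : 𝕜) - k) / ((#s : 𝕜) - 1)) := by
    rw [mul_div_assoc', eq_div_iff hs₁.ne']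
    have key := Nat.choose_mul_succ_eq (#s - 2) (k - 1)
    rw [show #s - 2 + 1 = #s - 1 by omega, show #s - 1 - (k - 1) = #s - k by omega] at key
    have := congrArg (Nat.cast : ℕ → 𝕜) key
    push_cast [Nat.cast_sub (by omega : 1 ≤ #s), Nat.cast_sub hks] at this
    exact this
  have hsum := sum_le_sum h
  simp only [sum_add_distrib, sum_powersetCard_sum hk, sum_powersetCard_sum_sum_sdiff hk,
    nsmul_eq_mul] at hsum
  rw [hc, mul_assoc, ← mul_add] at hsum
  exact le_of_mul_le_mul_left hsum hc₁

theorem sum_eq_sum_sdiff_biUnion_add_sum_sum_inter {P : Type*} (A : Finset ι) (t : Finset P)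
    {S : P → Finset ι} (hS : (t : Set P).PairwiseDisjoint S) (w : ι → M) :
    ∑ x ∈ A, w x = ∑ x ∈ A \ t.biUnion S, w x + ∑ j ∈ t, ∑ x ∈ A ∩ S j, w x := by
  have hAS : (t : Set P).PairwiseDisjoint fun j => A ∩ S j := fun i hi j hj hij =>
    (hS hi hj hij).mono inter_subset_right inter_subset_right
  rw [← sum_biUnion hAS, ← inter_biUnion, add_comm, sum_inter_add_sum_sdiff]

theorem sum_sum_inter_le_sum {P N : Type*} [AddCommMonoid N] [PartialOrder N]
    [IsOrderedAddMonoid N] {t : Finset P} {O : P → Finset ι}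
    (hO : (t : Set P).PairwiseDisjoint O) {A : Finset ι} {w : ι → N} (hw : ∀ x ∈ A, 0 ≤ w x) :
    ∑ i ∈ t, ∑ x ∈ O i ∩ A, w x ≤ ∑ x ∈ A, w x := by
  have hOA : (t : Set P).PairwiseDisjoint fun i => O i ∩ A := fun i hi j hj hij =>
    (hO hi hj hij).mono inter_subset_left inter_subset_left
  rw [← sum_biUnion hOA]
  exact sum_le_sum_of_subset_of_nonneg (biUnion_subset.2 fun _ _ => inter_subset_right)
    fun x hx _ => hw x hx

end Finset

theorem sum_weight_le_of_forall_deviation {P ι : Type*} [Fintype P] [DecidableEq P]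
    [DecidableEq ι] {w : ι → ℝ} {α : ℝ} {S O : P → Finset ι} (hS : Pairwise (Disjoint on S))
    (K : Finset P)
    (hdev : ∀ T : P → Finset ι, (∀ i ∈ K, T i ⊆ O i) →
      (∀ i ∈ K, ∀ j ∉ K, Disjoint (T i) (S j)) →
      ∑ i ∈ K, ∑ x ∈ T i, w x ≤ α * ∑ i ∈ K, ∑ x ∈ S i, w x) :
    ∑ i ∈ K, ∑ x ∈ O i, w x
      ≤ α * ∑ i ∈ K, ∑ x ∈ S i, w x + ∑ i ∈ K, ∑ j ∈ univ \ K, ∑ x ∈ O i ∩ S j, w x := by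
  set B := (univ \ K).biUnion S
  have hT := hdev (fun i => O i \ B) (fun i _ => sdiff_subset) fun i _ j hj =>
    sdiff_disjoint.mono_right (subset_biUnion_of_mem S (by simpa using hj))
  have hsplit : ∀ i ∈ K, ∑ x ∈ O i, w x
      = ∑ x ∈ O i \ B, w x + ∑ j ∈ univ \ K, ∑ x ∈ O i ∩ S j, w x := fun i _ =>
    sum_eq_sum_sdiff_biUnion_add_sum_sum_inter (O i) _ (hS.set_pairwise _) w
  rw [sum_congr rfl hsplit, sum_add_distrib]
  exact add_le_add_left hT _

theorem set_packing_collusion_poa_upper_bound_general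
    {ι : Type} [DecidableEq ι] (J : Finset ι) (w : ι → ℝ)
    (hw : ∀ j ∈ J, 0 ≤ w j) (n : ℕ) (hn : 2 ≤ n)
    (𝒮 : Fin n → Set (Finset ι))
    (hJ : ∀ i, ∀ A ∈ 𝒮 i, A ⊆ J)
    (hdc : ∀ i, ∀ A ∈ 𝒮 i, ∀ T, T ⊆ A → T ∈ 𝒮 i)
    (α : ℝ)
    (k : ℕ) (hk1 : 1 ≤ k) (hkn : k ≤ n)
    (S O : Fin n → Finset ι)
    (hS : ∀ i, S i ∈ 𝒮 i)
    (hSdisj : ∀ i j, i ≠ j → Disjoint (S i) (S j))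
    (hO : ∀ i, O i ∈ 𝒮 i)
    (hOdisj : ∀ i j, i ≠ j → Disjoint (O i) (O j))
    -- S is an α-approximate k-collusion Nash equilibrium
    (hColl : ∀ K : Finset (Fin n), K.card ≤ k →
      ∀ T : Fin n → Finset ι,
        (∀ i ∈ K, T i ∈ 𝒮 i) →
        (∀ i ∈ K, ∀ j ∈ K, i ≠ j → Disjoint (T i) (T j)) →
        (∀ i ∈ K, ∀ j, j ∉ K → Disjoint (T i) (S j)) →
        ∑ i ∈ K, ∑ t ∈ T i, w t ≤ α * ∑ i ∈ K, ∑ t ∈ S i, w t) :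
    ∑ i, ∑ j ∈ O i, w j
      ≤ (α + ((n : ℝ) - k) / ((n : ℝ) - 1)) * ∑ i, ∑ j ∈ S i, w j := by
  have hcoalition : ∀ K ∈ univ.powersetCard k, ∑ i ∈ K, ∑ x ∈ O i, w x
      ≤ ∑ i ∈ K, α * ∑ x ∈ S i, w x + ∑ i ∈ K, ∑ j ∈ univ \ K, ∑ x ∈ O i ∩ S j, w x := by
    intro K hK
    rw [← mul_sum]
    exact sum_weight_le_of_forall_deviation (fun i j h => hSdisj i j h) K fun T hTO hTS =>
      hColl K (mem_powersetCard.1 hK).2.le T (fun i hi => hdc i _ (hO i) _ (hTO i hi))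
        (fun i hi j hj hij => (hOdisj i j hij).mono (hTO i hi) (hTO j hj)) hTS
  have hcross : ∑ j, ∑ i ∈ univ.erase j, ∑ x ∈ O i ∩ S j, w x ≤ ∑ j, ∑ x ∈ S j, w x :=
    sum_le_sum fun j _ => sum_sum_inter_le_sum (fun i _ i' _ h => hOdisj i i' h)
      fun x hx => hw x (hJ j _ (hS j) hx)
  have havg := sum_le_sum_add_of_forall_mem_powersetCard (by simpa) hk1 (by simpa) hcoalition
  simp only [card_univ, Fintype.card_fin, ← mul_sum] at havg
  have hfrac : 0 ≤ ((n : ℝ) - k) / ((n : ℝ) - 1) :=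
    div_nonneg (sub_nonneg.2 (by exact_mod_cast hkn))
      (sub_nonneg.2 (by exact_mod_cast hn.trans' one_le_two))
  calc ∑ i, ∑ j ∈ O i, w j
      ≤ α * ∑ i, ∑ j ∈ S i, w j
          + ((n : ℝ) - k) / ((n : ℝ) - 1) * ∑ j, ∑ i ∈ univ.erase j, ∑ x ∈ O i ∩ S j, w x :=
        havg
    _ ≤ α * ∑ i, ∑ j ∈ S i, w j + ((n : ℝ) - k) / ((n : ℝ) - 1) * ∑ i, ∑ j ∈ S i, w j := by
        gcongr
    _ = _ := by ring

/-- For every set packing game with `n ≥ 2` players, every real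
`α ≥ 1`, every integer `k` with `1 ≤ k ≤ n`, every `α`-approximate `k`-collusion Nash
equilibrium `S` and every feasible profile `O`, the total values satisfy
`w(O) ≤ (α + (n−k)/(n−1))·w(S)`. -/
theorem set_packing_collusion_poa_upper_bound
    {ι : Type} [DecidableEq ι] (J : Finset ι) (w : ι → ℝ)
    (hw : ∀ j ∈ J, 0 ≤ w j) (n : ℕ) (hn : 2 ≤ n)
    (𝒮 : Fin n → Set (Finset ι))
    (hJ : ∀ i, ∀ A ∈ 𝒮 i, A ⊆ J)
    (hdc : ∀ i, ∀ A ∈ 𝒮 i, ∀ T, T ⊆ A → T ∈ 𝒮 i)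
    (hempty : ∀ i, ∅ ∈ 𝒮 i)
    (α : ℝ) (hα : 1 ≤ α)
    (k : ℕ) (hk1 : 1 ≤ k) (hkn : k ≤ n)
    (S O : Fin n → Finset ι)
    (hS : ∀ i, S i ∈ 𝒮 i)
    (hSdisj : ∀ i j, i ≠ j → Disjoint (S i) (S j))
    (hO : ∀ i, O i ∈ 𝒮 i)
    (hOdisj : ∀ i j, i ≠ j → Disjoint (O i) (O j))
    -- S is an α-approximate k-collusion Nash equilibrium
    (hColl : ∀ K : Finset (Fin n), K.card ≤ k →
      ∀ T : Fin n → Finset ι,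
        (∀ i ∈ K, T i ∈ 𝒮 i) →
        (∀ i ∈ K, ∀ j ∈ K, i ≠ j → Disjoint (T i) (T j)) →
        (∀ i ∈ K, ∀ j, j ∉ K → Disjoint (T i) (S j)) →
        ∑ i ∈ K, ∑ t ∈ T i, w t ≤ α * ∑ i ∈ K, ∑ t ∈ S i, w t) :
    ∑ i, ∑ j ∈ O i, w j
      ≤ (α + ((n : ℝ) - k) / ((n : ℝ) - 1)) * ∑ i, ∑ j ∈ S i, w j :=
  set_packing_collusion_poa_upper_bound_general J w hw n hn 𝒮 hJ hdc α k hk1 hkn S O hS hSdisj hO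
    hOdisj hColl
end

section
/- For every integer n ≥ 2, every integer k with 1 ≤ k ≤ n, and every real α ≥ 1, there exists a set packing game with n players, an α-approximate k-collusion Nash equilibrium S with w(S) > 0, and a feasible profile O, such that w(O)/w(S) = α + (n−k)/(n−1); hence the k-collusion price of anarchy of set packing games under α-approximate k-collusion Nash equilibria is exactly α + (n−k)/(n−1). -/
/-!
Items are the cells `(i, j)` of an `n × n` grid. In the equilibrium `S` player `i` holds the
off-diagonal cells of row `i`, in the profile `O` the whole column `i`; off-diagonal cells weigh
`1 / (n - 1)` and diagonal cells weigh `α - 1 + (n - k) / (n - 1)`, so `w(S i) = 1` and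
`w(O i) = α + (n - k) / (n - 1)`. A coalition `K` may not touch the rows of players outside `K`,
so a member switching to its column gets at most the diagonal cell and `|K| - 1 ≤ k - 1`
off-diagonal ones, which is worth at most `α`.
-/

open Finset

namespace SetPackingLowerBound

variable {n : ℕ} {d c : ℝ}

def cell (n : ℕ) (i j : Fin n) : ℕ := n * i + j

lemma cell_div (i j : Fin n) : cell n i j / n = i := by
  rw [cell, Nat.mul_add_div i.pos, Nat.div_eq_of_lt j.isLt, add_zero]

lemma cell_mod (i j : Fin n) : cell n i j % n = j := by
  rw [cell, Nat.mul_add_mod, Nat.mod_eq_of_lt j.isLt]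

lemma cell_inj {i j i' j' : Fin n} : cell n i j = cell n i' j' ↔ i = i' ∧ j = j' := by
  refine ⟨fun h => ⟨Fin.ext ?_, Fin.ext ?_⟩, fun ⟨hi, hj⟩ => hi ▸ hj ▸ rfl⟩
  · rw [← cell_div i j, h, cell_div]
  · rw [← cell_mod i j, h, cell_mod]

lemma cell_lt (i j : Fin n) : cell n i j < n * n := by
  unfold cell
  nlinarith [i.isLt, j.isLt]

def row (i : Fin n) : Finset ℕ := (univ.erase i).image (cell n i)

def col (i : Fin n) : Finset ℕ := univ.image (cell n · i)

lemma mem_row {i : Fin n} {m : ℕ} : m ∈ row i ↔ ∃ j ≠ i, cell n i j = m := by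
  simp [row]

lemma mem_col {i : Fin n} {m : ℕ} : m ∈ col i ↔ ∃ j, cell n j i = m := by
  simp [col]

lemma disjoint_row {i i' : Fin n} (h : i ≠ i') : Disjoint (row i) (row i') := by
  rw [disjoint_left]
  rintro m hm hm'
  obtain ⟨j, -, rfl⟩ := mem_row.1 hm
  obtain ⟨j', -, hj'⟩ := mem_row.1 hm'
  exact h (cell_inj.1 hj').1.symm

lemma disjoint_col {i i' : Fin n} (h : i ≠ i') : Disjoint (col i) (col i') := by
  rw [disjoint_left]
  rintro m hm hm'
  obtain ⟨j, rfl⟩ := mem_col.1 hm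
  obtain ⟨j', hj'⟩ := mem_col.1 hm'
  exact h (cell_inj.1 hj').2.symm

def strategies (n : ℕ) (i : Fin n) : Set (Finset ℕ) := {A | A ⊆ row i ∨ A ⊆ col i}

lemma subset_range_of_mem_strategies {i : Fin n} {A : Finset ℕ} (hA : A ∈ strategies n i) :
    A ⊆ range (n * n) := by
  have hrow : row i ⊆ range (n * n) := fun m hm => by
    obtain ⟨j, -, rfl⟩ := mem_row.1 hm
    exact mem_range.2 (cell_lt i j)
  have hcol : col i ⊆ range (n * n) := fun m hm => by
    obtain ⟨j, rfl⟩ := mem_col.1 hm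
    exact mem_range.2 (cell_lt j i)
  exact hA.elim (·.trans hrow) (·.trans hcol)

lemma mem_strategies_of_subset {i : Fin n} {A B : Finset ℕ} (hA : A ∈ strategies n i)
    (hB : B ⊆ A) : B ∈ strategies n i :=
  hA.imp hB.trans hB.trans

/-- `m / n` and `m % n` are the row and the column of the cell `m`. -/
def weight (n : ℕ) (d c : ℝ) (m : ℕ) : ℝ := if m / n = m % n then d else c

lemma weight_cell (i j : Fin n) : weight n d c (cell n i j) = if i = j then d else c := by
  simp only [weight, cell_div, cell_mod, Fin.val_inj]

lemma weight_nonneg (hd : 0 ≤ d) (hc : 0 ≤ c) (m : ℕ) : 0 ≤ weight n d c m := by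
  unfold weight
  split_ifs <;> assumption

lemma sum_weight_row (i : Fin n) : ∑ m ∈ row i, weight n d c m = ((n : ℝ) - 1) * c := by
  rw [row, sum_image fun j _ j' _ h => (cell_inj.1 h).2,
    sum_congr rfl fun j hj => by rw [weight_cell, if_neg (ne_of_mem_erase hj).symm],
    sum_const, card_erase_of_mem (mem_univ i), card_univ, Fintype.card_fin, nsmul_eq_mul,
    Nat.cast_pred i.pos]

lemma sum_weight_image_col {s : Finset (Fin n)} {i : Fin n} (hi : i ∈ s) :
    ∑ m ∈ s.image (cell n · i), weight n d c m = d + ((#s : ℝ) - 1) * c := by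
  rw [sum_image fun j _ j' _ h => (cell_inj.1 h).1, ← add_sum_erase s _ hi, weight_cell,
    if_pos rfl, sum_congr rfl fun j hj => by rw [weight_cell, if_neg (ne_of_mem_erase hj)],
    sum_const, card_erase_of_mem hi, nsmul_eq_mul, Nat.cast_pred (card_pos.2 ⟨i, hi⟩)]

lemma sum_weight_col (i : Fin n) : ∑ m ∈ col i, weight n d c m = d + ((n : ℝ) - 1) * c := by
  simpa [col] using sum_weight_image_col (d := d) (c := c) (mem_univ i)

lemma subset_image_col_of_disjoint_row {K : Finset (Fin n)} {i : Fin n} {T : Finset ℕ}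
    (hi : i ∈ K) (hT : T ⊆ col i) (hTS : ∀ j ∉ K, Disjoint T (row j)) :
    T ⊆ K.image (cell n · i) := by
  intro m hm
  obtain ⟨j, rfl⟩ := mem_col.1 (hT hm)
  refine mem_image_of_mem _ (not_not.1 fun hj => ?_)
  exact disjoint_left.1 (hTS j hj) hm (mem_row.2 ⟨i, fun h => hj (h ▸ hi), rfl⟩)

lemma sum_weight_le_of_mem_strategies (hd : 0 ≤ d) (hc : 0 ≤ c) {K : Finset (Fin n)} {i : Fin n}
    {T : Finset ℕ} (hi : i ∈ K) (hT : T ∈ strategies n i) (hTS : ∀ j ∉ K, Disjoint T (row j)) :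
    ∑ m ∈ T, weight n d c m ≤ max (((n : ℝ) - 1) * c) (d + ((#K : ℝ) - 1) * c) := by
  have hmono {A B : Finset ℕ} (h : A ⊆ B) : ∑ m ∈ A, weight n d c m ≤ ∑ m ∈ B, weight n d c m :=
    sum_le_sum_of_subset_of_nonneg h fun m _ _ => weight_nonneg hd hc m
  rcases hT with hT | hT
  · exact le_max_of_le_left ((hmono hT).trans_eq (sum_weight_row i))
  · exact le_max_of_le_right
      ((hmono (subset_image_col_of_disjoint_row hi hT hTS)).trans_eq (sum_weight_image_col hi))

lemma row_collusion_equilibrium {k : ℕ} {α : ℝ} (hα : 1 ≤ α) (hd : 0 ≤ d) (hc : 0 ≤ c)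
    (hdk : d + ((k : ℝ) - 1) * c ≤ α * (((n : ℝ) - 1) * c)) (K : Finset (Fin n)) (hK : #K ≤ k)
    (T : Fin n → Finset ℕ) (hT : ∀ i ∈ K, T i ∈ strategies n i)
    (hTS : ∀ i ∈ K, ∀ j, j ∉ K → Disjoint (T i) (row j)) :
    ∑ i ∈ K, ∑ m ∈ T i, weight n d c m ≤ α * ∑ i ∈ K, ∑ m ∈ row i, weight n d c m := by
  rw [mul_sum]
  refine sum_le_sum fun i hi => ?_
  have hn : (1 : ℝ) ≤ n := by exact_mod_cast i.pos
  have hK' : (#K : ℝ) ≤ k := by exact_mod_cast hK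
  rw [sum_weight_row]
  refine (sum_weight_le_of_mem_strategies hd hc hi (hT i hi) (hTS i hi)).trans (max_le ?_ ?_)
  · exact le_mul_of_one_le_left (mul_nonneg (by linarith) hc) hα
  · exact le_trans (by gcongr) hdk

end SetPackingLowerBound

open SetPackingLowerBound in
theorem set_packing_collusion_poa_lower_bound_general
    (n k : ℕ) (hn : 2 ≤ n) (hkn : k ≤ n) (α : ℝ) (hα : 1 ≤ α) :
    ∃ (J : Finset ℕ) (w : ℕ → ℝ) (𝒮 : Fin n → Set (Finset ℕ))
      (S O : Fin n → Finset ℕ),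
      (∀ j ∈ J, 0 ≤ w j) ∧
      (∀ i, ∀ A ∈ 𝒮 i, A ⊆ J) ∧
      (∀ i, ∀ A ∈ 𝒮 i, ∀ T, T ⊆ A → T ∈ 𝒮 i) ∧
      (∀ i, ∅ ∈ 𝒮 i) ∧
      -- S is a feasible profile
      (∀ i, S i ∈ 𝒮 i) ∧
      (∀ i j, i ≠ j → Disjoint (S i) (S j)) ∧
      -- O is a feasible profile
      (∀ i, O i ∈ 𝒮 i) ∧
      (∀ i j, i ≠ j → Disjoint (O i) (O j)) ∧
      -- S is an α-approximate k-collusion Nash equilibrium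
      (∀ K : Finset (Fin n), K.card ≤ k →
        ∀ T : Fin n → Finset ℕ,
          (∀ i ∈ K, T i ∈ 𝒮 i) →
          (∀ i ∈ K, ∀ j ∈ K, i ≠ j → Disjoint (T i) (T j)) →
          (∀ i ∈ K, ∀ j, j ∉ K → Disjoint (T i) (S j)) →
          ∑ i ∈ K, ∑ t ∈ T i, w t ≤ α * ∑ i ∈ K, ∑ t ∈ S i, w t) ∧
      -- positive value and ratio exactly α + (n−k)/(n−1)
      0 < ∑ i, ∑ j ∈ S i, w j ∧
      (∑ i, ∑ j ∈ O i, w j) / (∑ i, ∑ j ∈ S i, w j)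
        = α + ((n : ℝ) - k) / ((n : ℝ) - 1) := by
  have hn1 : (0 : ℝ) < n - 1 := by
    have : (2 : ℝ) ≤ n := by exact_mod_cast hn
    linarith
  have hkn' : (k : ℝ) ≤ n := by exact_mod_cast hkn
  set c : ℝ := 1 / ((n : ℝ) - 1)
  set d : ℝ := α - 1 + ((n : ℝ) - k) / ((n : ℝ) - 1)
  have hc : 0 ≤ c := by positivity
  have hd : 0 ≤ d := add_nonneg (by linarith) (div_nonneg (by linarith) hn1.le)
  have hrow : ((n : ℝ) - 1) * c = 1 := mul_one_div_cancel hn1.ne'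
  have hdk : d + ((k : ℝ) - 1) * c = α := by simp only [d, c]; field_simp; ring
  have hS : ∑ i : Fin n, ∑ m ∈ row i, weight n d c m = n := by simp [sum_weight_row, hrow]
  have hO : ∑ i : Fin n, ∑ m ∈ col i, weight n d c m = n * (d + 1) := by
    simp [sum_weight_col, hrow, mul_add]
  refine ⟨range (n * n), weight n d c, strategies n, row, col, fun m _ => weight_nonneg hd hc m,
    fun _ _ => subset_range_of_mem_strategies, fun _ _ hA _ => mem_strategies_of_subset hA,
    fun _ => Or.inl (empty_subset _), fun _ => Or.inl subset_rfl, fun _ _ => disjoint_row,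
    fun _ => Or.inr subset_rfl, fun _ _ => disjoint_col,
    fun K hK T hT _ hTS => row_collusion_equilibrium hα hd hc (by rw [hdk, hrow, mul_one]) K hK
      T hT hTS, by rw [hS]; positivity, ?_⟩
  rw [hO, hS, mul_div_cancel_left₀ _ (by positivity)]
  ring

/-- For every integer `n ≥ 2`, every integer `k` with `1 ≤ k ≤ n`,
and every real `α ≥ 1`, there exists a set packing game with `n` players, an
`α`-approximate `k`-collusion Nash equilibrium `S` with `w(S) > 0`, and a feasible
profile `O`, such that `w(O)/w(S) = α + (n−k)/(n−1)`; hence the `k`-collusion price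
of anarchy of set packing games under `α`-approximate `k`-collusion Nash equilibria is
exactly `α + (n−k)/(n−1)`. -/
theorem set_packing_collusion_poa_lower_bound
    (n k : ℕ) (hn : 2 ≤ n) (hk1 : 1 ≤ k) (hkn : k ≤ n) (α : ℝ) (hα : 1 ≤ α) :
    ∃ (J : Finset ℕ) (w : ℕ → ℝ) (𝒮 : Fin n → Set (Finset ℕ))
      (S O : Fin n → Finset ℕ),
      (∀ j ∈ J, 0 ≤ w j) ∧
      (∀ i, ∀ A ∈ 𝒮 i, A ⊆ J) ∧
      (∀ i, ∀ A ∈ 𝒮 i, ∀ T, T ⊆ A → T ∈ 𝒮 i) ∧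
      (∀ i, ∅ ∈ 𝒮 i) ∧
      -- S is a feasible profile
      (∀ i, S i ∈ 𝒮 i) ∧
      (∀ i j, i ≠ j → Disjoint (S i) (S j)) ∧
      -- O is a feasible profile
      (∀ i, O i ∈ 𝒮 i) ∧
      (∀ i j, i ≠ j → Disjoint (O i) (O j)) ∧
      -- S is an α-approximate k-collusion Nash equilibrium
      (∀ K : Finset (Fin n), K.card ≤ k →
        ∀ T : Fin n → Finset ℕ,
          (∀ i ∈ K, T i ∈ 𝒮 i) →
          (∀ i ∈ K, ∀ j ∈ K, i ≠ j → Disjoint (T i) (T j)) →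
          (∀ i ∈ K, ∀ j, j ∉ K → Disjoint (T i) (S j)) →
          ∑ i ∈ K, ∑ t ∈ T i, w t ≤ α * ∑ i ∈ K, ∑ t ∈ S i, w t) ∧
      -- positive value and ratio exactly α + (n−k)/(n−1)
      0 < ∑ i, ∑ j ∈ S i, w j ∧
      (∑ i, ∑ j ∈ O i, w j) / (∑ i, ∑ j ∈ S i, w j)
        = α + ((n : ℝ) - k) / ((n : ℝ) - 1) :=
  set_packing_collusion_poa_lower_bound_general n k hn hkn α hα
end
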